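/- arXiv:1301.6069 — 9 statements merged into one kernel-verified Lean document; each statement's English description precedes it below -/
import Mathlib

section
/- (Lemma A1.) Let M₁,ₙ, M₂,ₙ ∈ (0,1) be sequences strictly increasing to 1, let V₁,ₙ := v₁(A₁,A₂) be the value of firm 1 for fractions (M₁,ₙ, M₂,ₙ), and let μ̃ₙ := μ̃(V₁,ₙ) and σ̃ₙ := σ̃(V₁,ₙ) be the moment-matched lognormal parameters. Then the sequence σ̃ₙ converges to a finite limit, while μ̃ₙ → +∞ as n → ∞. -/
/-! With `ε = 1 - M₁ M₂ → 0`, the rescaled value `ε V` is dominated by `A₁ + A₂ ∈ L²` and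
converges pointwise to `(A₁ + A₂ - d₁ - d₂)⁺` off the event `{A₁ + A₂ = d₁ + d₂}`. That event is
null: along the lines `Z₁ = const` (or `Z₂ = const`), `A₁ + A₂` is a strictly convex function
of the other coordinate and so takes each value only finitely often. By dominated convergence the
first two moments of `ε V` converge to positive limits. Now `σ̃` only depends on the scale-invariant
ratio `E[V²] / E[V]²`, so it converges, while `μ̃ = log E[V] - σ̃² / 2` and `E[V] → ∞` because
`ε E[V]` has a positive limit.
-/

open Filter MeasureTheory ProbabilityTheory

open Classical in
/-- The value of firm 1 under cross-ownership of equity only, as a (piecewise-defined)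
derivative of the exogenous asset values `(a₁, a₂)`:
it equals `(a₁ + M₁ a₂ − M₁ M₂ d₁ − M₁ d₂)/(1 − M₁ M₂)` on `A_ss`,
`a₁ + M₁ a₂ − M₁ d₂` on `A_ds`, and `a₁` on `A_sd ∪ A_dd`. -/
noncomputable def v1eq (d₁ d₂ M₁ M₂ a₁ a₂ : ℝ) : ℝ :=
  if d₁ + M₁ * d₂ ≤ a₁ + M₁ * a₂ ∧ M₂ * d₁ + d₂ ≤ M₂ * a₁ + a₂ then
    (a₁ + M₁ * a₂ - M₁ * M₂ * d₁ - M₁ * d₂) / (1 - M₁ * M₂)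
  else if a₁ + M₁ * a₂ < d₁ + M₁ * d₂ ∧ d₂ ≤ a₂ then
    a₁ + M₁ * a₂ - M₁ * d₂
  else a₁

/-- The standard normal distribution function `Φ`. -/
noncomputable def stdNormalCdf (x : ℝ) : ℝ :=
  ((ProbabilityTheory.gaussianReal 0 1) (Set.Iic x)).toReal

open Real Set

open scoped NNReal ENNReal Topology

theorem StrictConvexOn.finite_setOf_eq {s : Set ℝ} {f : ℝ → ℝ} (hf : StrictConvexOn ℝ s f)
    (c : ℝ) : {x ∈ s | f x = c}.Finite := by
  set S := {x ∈ s | f x = c}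
  have no_middle : ∀ x ∈ S, ∀ y ∈ S, ∀ z ∈ S, x < y → y < z → False := by
    rintro x ⟨hx, rfl⟩ y ⟨hy, hfy⟩ z ⟨hz, hfz⟩ hxy hyz
    have := hf.lt_on_openSegment hx hz (hxy.trans hyz).ne
      (by rw [openSegment_eq_Ioo (hxy.trans hyz)]; exact ⟨hxy, hyz⟩)
    simp [hfy, hfz] at this
  rcases S.eq_empty_or_nonempty with hS | ⟨p, hp⟩
  · simp [hS]
  have below : {x ∈ S | x < p}.Subsingleton := by
    rintro x ⟨hx, hxp⟩ y ⟨hy, hyp⟩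
    by_contra hne
    rcases lt_or_gt_of_ne hne with h | h
    · exact no_middle x hx y hy p hp h hyp
    · exact no_middle y hy x hx p hp h hxp
  have above : {x ∈ S | p < x}.Subsingleton := by
    rintro x ⟨hx, hpx⟩ y ⟨hy, hpy⟩
    by_contra hne
    rcases lt_or_gt_of_ne hne with h | h
    · exact no_middle p hp x hx y hy hpx h
    · exact no_middle p hp y hy x hx hpy h
  refine ((below.finite.union (finite_singleton p)).union above.finite).subset fun x hx => ?_
  rcases lt_trichotomy x p with h | rfl | h
  · exact Or.inl (Or.inl ⟨hx, h⟩)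
  · exact Or.inl (Or.inr rfl)
  · exact Or.inr ⟨hx, h⟩

theorem strictConvexOn_exp_const_add_mul {a : ℝ} (ha : a ≠ 0) (m : ℝ) :
    StrictConvexOn ℝ univ fun x => exp (m + a * x) := by
  refine ⟨convex_univ, fun x _ y _ hxy s t hs ht hst => ?_⟩
  have hne : m + a * x ≠ m + a * y := by simpa [ha] using hxy
  have := strictConvexOn_exp.2 (mem_univ _) (mem_univ _) hne hs ht hst
  convert this using 2
  simp only [smul_eq_mul]
  linear_combination (-m) * hst

theorem convexOn_exp_const_add_mul (a m : ℝ) : ConvexOn ℝ univ fun x => exp (m + a * x) := by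
  rcases eq_or_ne a 0 with rfl | ha
  · simpa using convexOn_const (exp m) convex_univ
  · exact (strictConvexOn_exp_const_add_mul ha m).convexOn

theorem finite_setOf_exp_add_exp_eq {a : ℝ} (ha : a ≠ 0) (m m' b c : ℝ) :
    {x | exp (m + a * x) + exp (m' + b * x) = c}.Finite := by
  simpa using ((strictConvexOn_exp_const_add_mul ha m).add_convexOn
    (convexOn_exp_const_add_mul b m')).finite_setOf_eq c

namespace ProbabilityTheory

section Gaussian

variable {Ω : Type*} [MeasurableSpace Ω] {P : Measure Ω} {X Y : Ω → ℝ}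

theorem IndepFun.map_mul_add_mul_eq_gaussianReal (hXY : IndepFun X Y P) (hX : Measurable X)
    (hY : Measurable Y) {m₁ m₂ : ℝ} {v₁ v₂ : ℝ≥0} (hXlaw : P.map X = gaussianReal m₁ v₁)
    (hYlaw : P.map Y = gaussianReal m₂ v₂) (a b : ℝ) :
    P.map (fun ω => a * X ω + b * Y ω) = gaussianReal (a * m₁ + b * m₂)
      (.mk (a ^ 2) (sq_nonneg _) * v₁ + .mk (b ^ 2) (sq_nonneg _) * v₂) := by
  have hmul : ∀ {Z : Ω → ℝ} {m : ℝ} {v : ℝ≥0}, Measurable Z → P.map Z = gaussianReal m v →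
      ∀ c : ℝ, P.map (fun ω => c * Z ω) = gaussianReal (c * m) (.mk (c ^ 2) (sq_nonneg _) * v) :=
    fun hZ hZlaw c => by
      rw [← gaussianReal_map_const_mul, ← hZlaw, Measure.map_map (measurable_const_mul c) hZ]
      rfl
  exact gaussianReal_add_gaussianReal_of_indepFun
    (hXY.comp (measurable_const_mul a) (measurable_const_mul b)) (hmul hX hXlaw a) (hmul hY hYlaw b)

theorem integrable_exp_const_add_of_map_eq_gaussianReal (hX : Measurable X) {m : ℝ} {v : ℝ≥0}
    (hXlaw : P.map X = gaussianReal m v) (c : ℝ) :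
    Integrable (fun ω => exp (c + X ω)) P := by
  have h : Integrable (fun x => exp c * exp (1 * x)) (P.map X) := by
    rw [hXlaw]
    exact (integrable_exp_mul_gaussianReal 1).const_mul _
  refine ((integrable_map_measure h.aestronglyMeasurable hX.aemeasurable).1 h).congr
    (ae_of_all _ fun ω => ?_)
  simp [exp_add]

theorem measure_lt_pos_of_map_eq_gaussianReal (hX : Measurable X) {m : ℝ} {v : ℝ≥0} (hv : v ≠ 0)
    (hXlaw : P.map X = gaussianReal m v) (K : ℝ) : 0 < P {ω | K < X ω} := by
  have : 0 < P.map X (Ioi K) := by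
    rw [hXlaw, pos_iff_ne_zero]
    intro h
    simpa using gaussianReal_absolutelyContinuous' m hv h
  rwa [Measure.map_apply hX measurableSet_Ioi] at this

end Gaussian

theorem IndepFun.measure_preimage_eq_zero_of_countable_sections {Ω α β : Type*}
    [MeasurableSpace Ω] [MeasurableSpace α] [MeasurableSpace β] {P : Measure Ω}
    [IsFiniteMeasure P] {X : Ω → α} {Y : Ω → β} (hXY : IndepFun X Y P) (hX : Measurable X)
    (hY : Measurable Y) [NullSingletonClass (P.map Y)] {S : Set (α × β)} (hS : MeasurableSet S)
    (hsec : ∀ x, {y | (x, y) ∈ S}.Countable) : P {ω | (X ω, Y ω) ∈ S} = 0 := by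
  have hmap : P.map (fun ω => (X ω, Y ω)) = (P.map X).prod (P.map Y) :=
    (indepFun_iff_map_prod_eq_prod_map_map hX.aemeasurable hY.aemeasurable).1 hXY
  change P ((fun ω => (X ω, Y ω)) ⁻¹' S) = 0
  rw [← Measure.map_apply_of_aemeasurable (hX.prodMk hY).aemeasurable hS, hmap,
    Measure.measure_prod_null hS]
  exact ae_of_all _ fun x => (hsec x).measure_zero _

theorem IndepFun.ae_exp_add_exp_ne {Ω : Type*} [MeasurableSpace Ω] {P : Measure Ω}
    [IsFiniteMeasure P] {X Y : Ω → ℝ} (hXY : IndepFun X Y P) (hX : Measurable X)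
    (hY : Measurable Y) [NullSingletonClass (P.map Y)] {m₁ m₂ a₁ a₂ b₁ b₂ : ℝ} (hb₁ : b₁ ≠ 0)
    (c : ℝ) :
    ∀ᵐ ω ∂P, exp (m₁ + a₁ * X ω + b₁ * Y ω) + exp (m₂ + a₂ * X ω + b₂ * Y ω) ≠ c := by
  rw [ae_iff]
  simp only [ne_eq, not_not]
  exact hXY.measure_preimage_eq_zero_of_countable_sections hX hY
    (S := {p | exp (m₁ + a₁ * p.1 + b₁ * p.2) + exp (m₂ + a₂ * p.1 + b₂ * p.2) = c})
    (measurableSet_eq_fun (by fun_prop) measurable_const)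
    fun x => (finite_setOf_exp_add_exp_eq hb₁ (m₁ + a₁ * x) (m₂ + a₂ * x) b₂ c).countable

end ProbabilityTheory

section StandardGaussianPair

variable {Ω : Type*} [MeasurableSpace Ω] {P : Measure Ω}
  {Z₁ Z₂ : Ω → ℝ} (hZ₁m : Measurable Z₁) (hZ₂m : Measurable Z₂)
  (hZ₁ : P.map Z₁ = gaussianReal 0 1) (hZ₂ : P.map Z₂ = gaussianReal 0 1)
  (hindep : IndepFun Z₁ Z₂ P)
include hZ₁m hZ₂m hZ₁ hZ₂ hindep

theorem memLp_two_exp_const_add_mul_add_mul (μ c₁ c₂ : ℝ) :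
    MemLp (fun ω => exp (μ + c₁ * Z₁ ω + c₂ * Z₂ ω)) 2 P := by
  refine (memLp_two_iff_integrable_sq (by fun_prop)).2 ?_
  refine (integrable_exp_const_add_of_map_eq_gaussianReal (by fun_prop)
    (hindep.map_mul_add_mul_eq_gaussianReal hZ₁m hZ₂m hZ₁ hZ₂ (2 * c₁) (2 * c₂)) (2 * μ)).congr
    (ae_of_all _ fun ω => ?_)
  simp only [sq, ← exp_add]
  ring_nf

theorem measure_lt_exp_const_add_mul_add_mul_pos {c₁ c₂ : ℝ} (hc : (c₁, c₂) ≠ (0, 0)) (μ : ℝ)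
    {K : ℝ} (hK : 0 < K) : 0 < P {ω | K < exp (μ + c₁ * Z₁ ω + c₂ * Z₂ ω)} := by
  have hv : c₁ ^ 2 + c₂ ^ 2 ≠ 0 := by
    contrapose! hc
    obtain ⟨h₁, h₂⟩ := (add_eq_zero_iff_of_nonneg (sq_nonneg _) (sq_nonneg _)).1 hc
    simp_all
  have := measure_lt_pos_of_map_eq_gaussianReal (by fun_prop)
    (fun h => hv (by simpa using congrArg NNReal.toReal h))
    (hindep.map_mul_add_mul_eq_gaussianReal hZ₁m hZ₂m hZ₁ hZ₂ c₁ c₂) (log K - μ)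
  refine this.trans_le (measure_mono fun ω hω => ?_)
  rw [mem_ofPred_eq] at hω ⊢
  rw [← log_lt_iff_lt_exp hK]
  linarith

theorem ae_exp_add_exp_ne [IsFiniteMeasure P] {c₁₁ c₁₂ : ℝ} (hc : (c₁₁, c₁₂) ≠ (0, 0))
    (μ₁ μ₂ c₂₁ c₂₂ c : ℝ) :
    ∀ᵐ ω ∂P, exp (μ₁ + c₁₁ * Z₁ ω + c₁₂ * Z₂ ω)
      + exp (μ₂ + c₂₁ * Z₁ ω + c₂₂ * Z₂ ω) ≠ c := by
  have : NullSingletonClass (P.map Z₁) := hZ₁ ▸ nullSingletonClass_gaussianReal one_ne_zero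
  have : NullSingletonClass (P.map Z₂) := hZ₂ ▸ nullSingletonClass_gaussianReal one_ne_zero
  by_cases h₁₂ : c₁₂ = 0
  · have h₁₁ : c₁₁ ≠ 0 := by rintro rfl; exact hc (by rw [h₁₂])
    filter_upwards [hindep.symm.ae_exp_add_exp_ne hZ₂m hZ₁m h₁₁ c
      (m₁ := μ₁) (a₁ := c₁₂) (m₂ := μ₂) (a₂ := c₂₂) (b₂ := c₂₁)] with ω h
    rwa [add_right_comm μ₁, add_right_comm μ₂]
  · exact hindep.ae_exp_add_exp_ne hZ₁m hZ₂m h₁₂ c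

end StandardGaussianPair

section Integrals

variable {Ω : Type*} [MeasurableSpace Ω] {P : Measure Ω}

theorem tendsto_pow_mul_integral_pow_of_dominated {ι : Type*} {l : Filter ι}
    [l.IsCountablyGenerated] {V : ι → Ω → ℝ} {ε : ι → ℝ} {B G : Ω → ℝ} (k : ℕ)
    (hV : ∀ i, AEStronglyMeasurable (V i) P) (hεV₀ : ∀ i ω, 0 ≤ ε i * V i ω)
    (hεVB : ∀ i ω, ε i * V i ω ≤ B ω) (hB : Integrable (fun ω => B ω ^ k) P)
    (hlim : ∀ᵐ ω ∂P, Tendsto (fun i => ε i * V i ω) l (𝓝 (G ω))) :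
    Tendsto (fun i => ε i ^ k * ∫ ω, V i ω ^ k ∂P) l (𝓝 (∫ ω, G ω ^ k ∂P)) := by
  have := tendsto_integral_filter_of_dominated_convergence (F := fun i ω => (ε i * V i ω) ^ k)
    (fun ω => B ω ^ k)
    (.of_forall fun i => ((hV i).const_mul (ε i)).pow k)
    (.of_forall fun i => ae_of_all _ fun ω => by
      rw [norm_eq_abs, abs_of_nonneg (pow_nonneg (hεV₀ i ω) k)]
      exact pow_le_pow_left₀ (hεV₀ i ω) (hεVB i ω) k)
    hB (hlim.mono fun ω h => h.pow k)
  simpa only [mul_pow, integral_const_mul] using this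

theorem integral_max_add_sub_pos [IsFiniteMeasure P] {A₁ A₂ : Ω → ℝ} {K : ℝ}
    (hint : Integrable (fun ω => A₁ ω + A₂ ω) P)
    (hA₂ : ∀ ω, 0 ≤ A₂ ω) (hK : 0 < P {ω | K < A₁ ω}) :
    0 < ∫ ω, max (A₁ ω + A₂ ω - K) 0 ∂P := by
  have hint' : Integrable (fun ω => max (A₁ ω + A₂ ω - K) 0) P :=
    (hint.sub (integrable_const K)).pos_part
  rw [integral_pos_iff_support_of_nonneg (f := fun ω => max (A₁ ω + A₂ ω - K) 0)
    (fun ω => le_max_right _ _) hint']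
  refine hK.trans_le (measure_mono fun ω (hω : K < A₁ ω) => ?_)
  rw [Function.mem_support]
  exact (lt_max_of_lt_left (by linarith [hA₂ ω])).ne'

end Integrals

section MatchedLognormal

variable {Ω : Type*} [MeasurableSpace Ω] {P : Measure Ω}

-- The paper's `μ̃(V)` and `σ̃(V)`.
noncomputable def matchedLogMean (V : Ω → ℝ) (P : Measure Ω) : ℝ :=
  1 / 2 * log ((∫ ω, V ω ∂P) ^ 4 / (variance V P + (∫ ω, V ω ∂P) ^ 2))

noncomputable def matchedLogStd (V : Ω → ℝ) (P : Measure Ω) : ℝ :=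
  √(log (variance V P / (∫ ω, V ω ∂P) ^ 2 + 1))

theorem matchedLogStd_eq [IsProbabilityMeasure P] {V : Ω → ℝ} (hV : MemLp V 2 P)
    (h : ∫ ω, V ω ∂P ≠ 0) :
    matchedLogStd V P = √(log ((∫ ω, V ω ^ 2 ∂P) / (∫ ω, V ω ∂P) ^ 2)) := by
  rw [matchedLogStd, variance_eq_sub hV]
  congr 2
  field_simp
  simp

theorem matchedLogMean_eq_log_integral_sub {V : Ω → ℝ} (h : 0 < ∫ ω, V ω ∂P) :
    matchedLogMean V P = log (∫ ω, V ω ∂P) - matchedLogStd V P ^ 2 / 2 := by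
  set m := ∫ ω, V ω ∂P
  have hv := variance_nonneg V P
  have hvm : 0 < variance V P + m ^ 2 := by positivity
  rw [matchedLogMean, matchedLogStd, sq_sqrt (log_nonneg (by simp; positivity)),
    div_add_one (by positivity), log_div hvm.ne' (by positivity),
    log_div (by positivity) hvm.ne', log_pow, log_pow]
  push_cast
  ring

variable {ι : Type*} {l : Filter ι} {V : ι → Ω → ℝ} {ε : ι → ℝ} {m : ℝ}

theorem tendsto_matchedLogStd [IsProbabilityMeasure P] (hV : ∀ i, MemLp (V i) 2 P) {s : ℝ}
    (h₁ : Tendsto (fun i => ε i * ∫ ω, V i ω ∂P) l (𝓝 m))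
    (h₂ : Tendsto (fun i => ε i ^ 2 * ∫ ω, V i ω ^ 2 ∂P) l (𝓝 s)) (hm : m ≠ 0) :
    Tendsto (fun i => matchedLogStd (V i) P) l (𝓝 (√(log (s / m ^ 2)))) := by
  rcases l.eq_or_neBot with rfl | hl
  · exact tendsto_bot
  have hsq : ∀ i, (∫ ω, V i ω ∂P) ^ 2 ≤ ∫ ω, V i ω ^ 2 ∂P := fun i => by
    have := variance_nonneg (V i) P
    rw [variance_eq_sub (hV i)] at this
    simpa using this
  have hms : m ^ 2 ≤ s := le_of_tendsto_of_tendsto' (h₁.pow 2) h₂ fun i => by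
    rw [mul_pow]; exact mul_le_mul_of_nonneg_left (hsq i) (sq_nonneg _)
  have hm2 : 0 < m ^ 2 := by positivity
  have hratio : Tendsto (fun i => (ε i ^ 2 * ∫ ω, V i ω ^ 2 ∂P) / (ε i * ∫ ω, V i ω ∂P) ^ 2) l
      (𝓝 (s / m ^ 2)) := h₂.div (h₁.pow 2) (pow_ne_zero 2 hm)
  have hcont := ((continuous_sqrt.tendsto _).comp
    ((continuousAt_log (div_pos (hm2.trans_le hms) hm2).ne').tendsto.comp hratio))
  refine hcont.congr' ?_
  filter_upwards [h₁.eventually_ne hm] with i hi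
  have hε : ε i ≠ 0 := left_ne_zero_of_mul hi
  rw [matchedLogStd_eq (hV i) (right_ne_zero_of_mul hi), Function.comp_apply,
    Function.comp_apply, mul_pow, mul_div_mul_left _ _ (pow_ne_zero 2 hε)]

theorem tendsto_matchedLogMean_atTop (hε : Tendsto ε l (𝓝[>] 0))
    (h₁ : Tendsto (fun i => ε i * ∫ ω, V i ω ∂P) l (𝓝 m)) (hm : 0 < m) {σ : ℝ}
    (hσ : Tendsto (fun i => matchedLogStd (V i) P) l (𝓝 σ)) :
    Tendsto (fun i => matchedLogMean (V i) P) l atTop := by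
  have hmean : Tendsto (fun i => ∫ ω, V i ω ∂P) l atTop := by
    refine (hε.inv_tendsto_nhdsGT_zero.atTop_mul_pos hm h₁).congr' ?_
    filter_upwards [hε.eventually eventually_mem_nhdsWithin] with i (hi : 0 < ε i)
    simp [hi.ne']
  have hlog := (tendsto_log_atTop.comp hmean).atTop_add ((hσ.pow 2).div_const 2).neg
  refine hlog.congr' ?_
  filter_upwards [hmean.eventually_gt_atTop 0] with i hi
  rw [matchedLogMean_eq_log_integral_sub hi]
  simp [sub_eq_add_neg]

end MatchedLognormal

section FirmValue

variable {d₁ d₂ M₁ M₂ a₁ a₂ : ℝ}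

theorem one_sub_mul_pos_of_mem_Ioo (hM₁ : M₁ ∈ Ioo (0 : ℝ) 1) (hM₂ : M₂ ∈ Ioo (0 : ℝ) 1) :
    0 < 1 - M₁ * M₂ :=
  sub_pos.2 (mul_lt_one_of_nonneg_of_lt_one_left hM₁.1.le hM₁.2 hM₂.2.le)

theorem v1eq_nonneg (hd₁ : 0 < d₁) (hM₁ : M₁ ∈ Ioo (0 : ℝ) 1) (hM₂ : M₂ ∈ Ioo (0 : ℝ) 1)
    (ha₁ : 0 < a₁) : 0 ≤ v1eq d₁ d₂ M₁ M₂ a₁ a₂ := by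
  have hε := one_sub_mul_pos_of_mem_Ioo hM₁ hM₂
  obtain ⟨hM₁0, hM₁1⟩ := hM₁
  obtain ⟨hM₂0, hM₂1⟩ := hM₂
  unfold v1eq
  split_ifs with hss hds
  · exact div_nonneg (by nlinarith [mul_pos hε hd₁]) hε.le
  · nlinarith [mul_nonneg hM₁0.le (sub_nonneg.2 hds.2)]
  · exact ha₁.le

theorem one_sub_mul_mul_v1eq_le (hd₁ : 0 < d₁) (hd₂ : 0 < d₂) (hM₁ : M₁ ∈ Ioo (0 : ℝ) 1)
    (hM₂ : M₂ ∈ Ioo (0 : ℝ) 1) (ha₁ : 0 < a₁) (ha₂ : 0 < a₂) :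
    (1 - M₁ * M₂) * v1eq d₁ d₂ M₁ M₂ a₁ a₂ ≤ a₁ + a₂ := by
  have hε := one_sub_mul_pos_of_mem_Ioo hM₁ hM₂
  obtain ⟨hM₁0, hM₁1⟩ := hM₁
  obtain ⟨hM₂0, hM₂1⟩ := hM₂
  unfold v1eq
  split_ifs with hss hds
  · rw [mul_div_cancel₀ _ hε.ne']
    nlinarith [mul_pos (mul_pos hM₁0 hM₂0) hd₁, mul_pos hM₁0 hd₂]
  · nlinarith [mul_nonneg hM₁0.le (sub_nonneg.2 hds.2), mul_pos hM₁0 hM₂0, mul_pos hM₁0 hd₂]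
  · nlinarith [mul_pos (mul_pos hM₁0 hM₂0) ha₁]

theorem v1eq_le_of_lt (hd₂ : 0 < d₂) (hM₁ : M₁ ∈ Ioo (0 : ℝ) 1) (ha₂ : 0 < a₂)
    (h : a₁ + M₁ * a₂ < d₁ + M₁ * d₂) : v1eq d₁ d₂ M₁ M₂ a₁ a₂ ≤ a₁ + a₂ := by
  unfold v1eq
  rw [if_neg fun hss => (not_le.2 h) hss.1]
  split_ifs
  · nlinarith [hM₁.1, hM₁.2]
  · linarith

theorem one_sub_mul_mul_v1eq_of_le (hM₁ : M₁ ∈ Ioo (0 : ℝ) 1) (hM₂ : M₂ ∈ Ioo (0 : ℝ) 1)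
    (h₁ : d₁ + M₁ * d₂ ≤ a₁ + M₁ * a₂) (h₂ : M₂ * d₁ + d₂ ≤ M₂ * a₁ + a₂) :
    (1 - M₁ * M₂) * v1eq d₁ d₂ M₁ M₂ a₁ a₂ = a₁ + M₁ * a₂ - M₁ * M₂ * d₁ - M₁ * d₂ := by
  rw [v1eq, if_pos ⟨h₁, h₂⟩, mul_div_cancel₀ _ (one_sub_mul_pos_of_mem_Ioo hM₁ hM₂).ne']

theorem measurable_v1eq (d₁ d₂ M₁ M₂ : ℝ) :
    Measurable fun a : ℝ × ℝ => v1eq d₁ d₂ M₁ M₂ a.1 a.2 := by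
  unfold v1eq
  refine Measurable.ite ?_ (by fun_prop) (Measurable.ite ?_ (by fun_prop) (by fun_prop))
  · rw [ofPred_and]
    exact (measurableSet_le (by fun_prop) (by fun_prop)).inter
      (measurableSet_le (by fun_prop) (by fun_prop))
  · rw [ofPred_and]
    exact (measurableSet_lt (by fun_prop) (by fun_prop)).inter
      (measurableSet_le (by fun_prop) (by fun_prop))

end FirmValue

theorem tendsto_one_sub_mul_nhdsGT_zero {ι : Type*} {l : Filter ι} {M₁ M₂ : ι → ℝ}
    (hM₁ : ∀ i, M₁ i ∈ Ioo (0 : ℝ) 1) (hM₂ : ∀ i, M₂ i ∈ Ioo (0 : ℝ) 1)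
    (hM₁lim : Tendsto M₁ l (𝓝 1)) (hM₂lim : Tendsto M₂ l (𝓝 1)) :
    Tendsto (fun i => 1 - M₁ i * M₂ i) l (𝓝[>] 0) :=
  tendsto_nhdsWithin_of_tendsto_nhds_of_eventually_within _
    (by simpa using (hM₁lim.mul hM₂lim).const_sub 1)
    (.of_forall fun i => one_sub_mul_pos_of_mem_Ioo (hM₁ i) (hM₂ i))

theorem tendsto_one_sub_mul_mul_v1eq {ι : Type*} {l : Filter ι} {d₁ d₂ a₁ a₂ : ℝ}
    {M₁ M₂ : ι → ℝ} (hd₁ : 0 < d₁) (hd₂ : 0 < d₂) (hM₁ : ∀ i, M₁ i ∈ Ioo (0 : ℝ) 1)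
    (hM₂ : ∀ i, M₂ i ∈ Ioo (0 : ℝ) 1) (hM₁lim : Tendsto M₁ l (𝓝 1))
    (hM₂lim : Tendsto M₂ l (𝓝 1)) (ha₁ : 0 < a₁) (ha₂ : 0 < a₂) (hne : a₁ + a₂ ≠ d₁ + d₂) :
    Tendsto (fun i => (1 - M₁ i * M₂ i) * v1eq d₁ d₂ (M₁ i) (M₂ i) a₁ a₂) l
      (𝓝 (max (a₁ + a₂ - (d₁ + d₂)) 0)) := by
  have hε := (tendsto_one_sub_mul_nhdsGT_zero hM₁ hM₂ hM₁lim hM₂lim).mono_right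
    nhdsWithin_le_nhds
  have lim₁ : Tendsto (fun i => a₁ + M₁ i * a₂ - (d₁ + M₁ i * d₂)) l
      (𝓝 (a₁ + a₂ - (d₁ + d₂))) := by
    simpa using ((hM₁lim.mul_const a₂).const_add a₁).sub ((hM₁lim.mul_const d₂).const_add d₁)
  rcases hne.lt_or_gt with hlt | hgt
  · rw [max_eq_right (by linarith)]
    have hupper : Tendsto (fun i => (1 - M₁ i * M₂ i) * (a₁ + a₂)) l (𝓝 0) := by
      simpa using hε.mul_const (a₁ + a₂)
    refine tendsto_of_tendsto_of_tendsto_of_le_of_le' tendsto_const_nhds hupper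
      (Eventually.of_forall fun i => ?_) ?_
    · exact mul_nonneg (one_sub_mul_pos_of_mem_Ioo (hM₁ i) (hM₂ i)).le
        (v1eq_nonneg hd₁ (hM₁ i) (hM₂ i) ha₁)
    filter_upwards [lim₁.eventually_lt_const (sub_neg.2 hlt)] with i hi
    exact mul_le_mul_of_nonneg_left (v1eq_le_of_lt hd₂ (hM₁ i) ha₂ (by linarith))
      (one_sub_mul_pos_of_mem_Ioo (hM₁ i) (hM₂ i)).le
  · rw [max_eq_left (by linarith)]
    have lim₂ : Tendsto (fun i => M₂ i * a₁ + a₂ - (M₂ i * d₁ + d₂)) l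
        (𝓝 (a₁ + a₂ - (d₁ + d₂))) := by
      simpa using ((hM₂lim.mul_const a₁).add_const a₂).sub ((hM₂lim.mul_const d₁).add_const d₂)
    have lim : Tendsto (fun i => a₁ + M₁ i * a₂ - M₁ i * M₂ i * d₁ - M₁ i * d₂) l
        (𝓝 (a₁ + a₂ - (d₁ + d₂))) := by
      convert (((hM₁lim.mul_const a₂).const_add a₁).sub ((hM₁lim.mul hM₂lim).mul_const d₁)).sub
        (hM₁lim.mul_const d₂) using 2
      ring
    refine lim.congr' ?_
    filter_upwards [lim₁.eventually_const_lt (sub_pos.2 hgt),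
      lim₂.eventually_const_lt (sub_pos.2 hgt)] with i h₁ h₂
    exact (one_sub_mul_mul_v1eq_of_le (hM₁ i) (hM₂ i) (by linarith) (by linarith)).symm

section FirmValueMoments

variable {Ω : Type*} [MeasurableSpace Ω] {P : Measure Ω}

variable {d₁ d₂ : ℝ} (hd₁ : 0 < d₁) (hd₂ : 0 < d₂) {A₁ A₂ : Ω → ℝ}
  (hA₁ : Measurable A₁) (hA₂ : Measurable A₂) (hA₁pos : ∀ ω, 0 < A₁ ω) (hA₂pos : ∀ ω, 0 < A₂ ω)
include hd₁ hd₂ hA₁ hA₂ hA₁pos hA₂pos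

theorem memLp_v1eq {p : ℝ≥0∞} (hA₁p : MemLp A₁ p P) (hA₂p : MemLp A₂ p P) {M₁ M₂ : ℝ}
    (hM₁ : M₁ ∈ Ioo (0 : ℝ) 1) (hM₂ : M₂ ∈ Ioo (0 : ℝ) 1) :
    MemLp (fun ω => v1eq d₁ d₂ M₁ M₂ (A₁ ω) (A₂ ω)) p P := by
  have hε := one_sub_mul_pos_of_mem_Ioo hM₁ hM₂
  refine ((hA₁p.add hA₂p).const_mul (1 - M₁ * M₂)⁻¹).of_le
    ((measurable_v1eq d₁ d₂ M₁ M₂).comp (hA₁.prodMk hA₂)).aestronglyMeasurable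
    (ae_of_all _ fun ω => ?_)
  rw [Pi.add_apply, norm_eq_abs, norm_eq_abs, abs_of_nonneg (v1eq_nonneg hd₁ hM₁ hM₂ (hA₁pos ω)),
    abs_of_pos (mul_pos (inv_pos.2 hε) (add_pos (hA₁pos ω) (hA₂pos ω))),
    le_inv_mul_iff₀ hε]
  exact one_sub_mul_mul_v1eq_le hd₁ hd₂ hM₁ hM₂ (hA₁pos ω) (hA₂pos ω)

theorem tendsto_pow_mul_integral_v1eq_pow {ι : Type*} {l : Filter ι} [l.IsCountablyGenerated]
    {M₁ M₂ : ι → ℝ} (hM₁ : ∀ i, M₁ i ∈ Ioo (0 : ℝ) 1) (hM₂ : ∀ i, M₂ i ∈ Ioo (0 : ℝ) 1)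
    (hM₁lim : Tendsto M₁ l (𝓝 1)) (hM₂lim : Tendsto M₂ l (𝓝 1))
    (hae : ∀ᵐ ω ∂P, A₁ ω + A₂ ω ≠ d₁ + d₂) (k : ℕ)
    (hB : Integrable (fun ω => (A₁ ω + A₂ ω) ^ k) P) :
    Tendsto (fun i => (1 - M₁ i * M₂ i) ^ k *
        ∫ ω, v1eq d₁ d₂ (M₁ i) (M₂ i) (A₁ ω) (A₂ ω) ^ k ∂P) l
      (𝓝 (∫ ω, max (A₁ ω + A₂ ω - (d₁ + d₂)) 0 ^ k ∂P)) :=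
  tendsto_pow_mul_integral_pow_of_dominated k
    (fun _ => ((measurable_v1eq d₁ d₂ _ _).comp (hA₁.prodMk hA₂)).aestronglyMeasurable)
    (fun i ω => mul_nonneg (one_sub_mul_pos_of_mem_Ioo (hM₁ i) (hM₂ i)).le
      (v1eq_nonneg hd₁ (hM₁ i) (hM₂ i) (hA₁pos ω)))
    (fun i ω => one_sub_mul_mul_v1eq_le hd₁ hd₂ (hM₁ i) (hM₂ i) (hA₁pos ω) (hA₂pos ω)) hB
    (hae.mono fun ω hω => tendsto_one_sub_mul_mul_v1eq hd₁ hd₂ hM₁ hM₂ hM₁lim hM₂lim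
      (hA₁pos ω) (hA₂pos ω) hω)

end FirmValueMoments

theorem matched_lognormal_parameters_limit_equity_only_general
    (Ω : Type) [MeasurableSpace Ω] (P : Measure Ω) [IsProbabilityMeasure P]
    (Z₁ Z₂ : Ω → ℝ) (hZ₁m : Measurable Z₁) (hZ₂m : Measurable Z₂)
    (hZ₁ : P.map Z₁ = gaussianReal 0 1) (hZ₂ : P.map Z₂ = gaussianReal 0 1)
    (hindep : IndepFun Z₁ Z₂ P)
    (μ₁ μ₂ c₁₁ c₁₂ c₂₁ c₂₂ : ℝ)
    (hc₁ : (c₁₁, c₁₂) ≠ ((0 : ℝ), (0 : ℝ)))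
    (A₁ A₂ : Ω → ℝ)
    (hA₁ : A₁ = fun ω => Real.exp (μ₁ + c₁₁ * Z₁ ω + c₁₂ * Z₂ ω))
    (hA₂ : A₂ = fun ω => Real.exp (μ₂ + c₂₁ * Z₁ ω + c₂₂ * Z₂ ω))
    (d₁ d₂ : ℝ) (hd₁ : 0 < d₁) (hd₂ : 0 < d₂)
    (M₁ M₂ : ℕ → ℝ)
    (hM₁ : ∀ n, M₁ n ∈ Set.Ioo (0 : ℝ) 1) (hM₂ : ∀ n, M₂ n ∈ Set.Ioo (0 : ℝ) 1)
    (hM₁lim : Tendsto M₁ atTop (nhds 1)) (hM₂lim : Tendsto M₂ atTop (nhds 1))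
    (V : ℕ → Ω → ℝ)
    (hV : ∀ n ω, V n ω = v1eq d₁ d₂ (M₁ n) (M₂ n) (A₁ ω) (A₂ ω))
    (μt σt : ℕ → ℝ)
    (hμt : ∀ n, μt n = (1 / 2) * Real.log ((∫ ω, V n ω ∂P) ^ 4 /
      (variance (V n) P + (∫ ω, V n ω ∂P) ^ 2)))
    (hσt : ∀ n, σt n = Real.sqrt (Real.log (variance (V n) P / (∫ ω, V n ω ∂P) ^ 2 + 1))) :
    (∃ L : ℝ, Tendsto σt atTop (nhds L)) ∧ Tendsto μt atTop atTop := by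
  obtain rfl : μt = fun n => matchedLogMean (V n) P := funext hμt
  obtain rfl : σt = fun n => matchedLogStd (V n) P := funext hσt
  obtain rfl : V = fun n ω => v1eq d₁ d₂ (M₁ n) (M₂ n) (A₁ ω) (A₂ ω) := funext₂ hV
  have hA : ∀ {A : Ω → ℝ} {μ c₁ c₂ : ℝ}, A = (fun ω => exp (μ + c₁ * Z₁ ω + c₂ * Z₂ ω)) →
      Measurable A ∧ (∀ ω, 0 < A ω) ∧ MemLp A 2 P := by
    rintro _ μ c₁ c₂ rfl
    exact ⟨by fun_prop, fun _ => exp_pos _,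
      memLp_two_exp_const_add_mul_add_mul hZ₁m hZ₂m hZ₁ hZ₂ hindep μ c₁ c₂⟩
  obtain ⟨hA₁m, hA₁pos, hA₁L2⟩ := hA hA₁
  obtain ⟨hA₂m, hA₂pos, hA₂L2⟩ := hA hA₂
  have hae : ∀ᵐ ω ∂P, A₁ ω + A₂ ω ≠ d₁ + d₂ :=
    hA₁ ▸ hA₂ ▸ ae_exp_add_exp_ne hZ₁m hZ₂m hZ₁ hZ₂ hindep hc₁ μ₁ μ₂ c₂₁ c₂₂ (d₁ + d₂)
  have hmoment := tendsto_pow_mul_integral_v1eq_pow hd₁ hd₂ hA₁m hA₂m hA₁pos hA₂pos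
    hM₁ hM₂ hM₁lim hM₂lim hae
  have hint : Integrable (fun ω => A₁ ω + A₂ ω) P := (hA₁L2.add hA₂L2).integrable one_le_two
  have h₁ := hmoment 1 (by simpa using hint)
  have h₂ := hmoment 2 (hA₁L2.add hA₂L2).integrable_sq
  simp only [pow_one] at h₁
  have hK : 0 < P {ω | d₁ + d₂ < A₁ ω} :=
    hA₁ ▸ measure_lt_exp_const_add_mul_add_mul_pos hZ₁m hZ₂m hZ₁ hZ₂ hindep hc₁ μ₁ (add_pos hd₁ hd₂)
  have hG := integral_max_add_sub_pos hint (fun ω => (hA₂pos ω).le) hK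
  have hσ := tendsto_matchedLogStd (fun n => memLp_v1eq hd₁ hd₂ hA₁m hA₂m hA₁pos hA₂pos
    hA₁L2 hA₂L2 (hM₁ n) (hM₂ n)) h₁ h₂ hG.ne'
  exact ⟨⟨_, hσ⟩, tendsto_matchedLogMean_atTop
    (tendsto_one_sub_mul_nhdsGT_zero hM₁ hM₂ hM₁lim hM₂lim) h₁ hG hσ⟩

/-- Lemma A1: under cross-ownership of equity only with lognormally
distributed exogenous asset values, as the cross-ownership fractions increase strictly
to 1, the moment-matched lognormal parameter `σ̃ₙ` converges to a finite limit while
`μ̃ₙ → +∞`. -/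
theorem matched_lognormal_parameters_limit_equity_only
    (Ω : Type) [MeasurableSpace Ω] (P : Measure Ω) [IsProbabilityMeasure P]
    (Z₁ Z₂ : Ω → ℝ) (hZ₁m : Measurable Z₁) (hZ₂m : Measurable Z₂)
    (hZ₁ : P.map Z₁ = gaussianReal 0 1) (hZ₂ : P.map Z₂ = gaussianReal 0 1)
    (hindep : IndepFun Z₁ Z₂ P)
    (μ₁ μ₂ c₁₁ c₁₂ c₂₁ c₂₂ : ℝ)
    (hc₁ : (c₁₁, c₁₂) ≠ ((0 : ℝ), (0 : ℝ))) (hc₂ : (c₂₁, c₂₂) ≠ ((0 : ℝ), (0 : ℝ)))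
    (A₁ A₂ : Ω → ℝ)
    (hA₁ : A₁ = fun ω => Real.exp (μ₁ + c₁₁ * Z₁ ω + c₁₂ * Z₂ ω))
    (hA₂ : A₂ = fun ω => Real.exp (μ₂ + c₂₁ * Z₁ ω + c₂₂ * Z₂ ω))
    (d₁ d₂ : ℝ) (hd₁ : 0 < d₁) (hd₂ : 0 < d₂)
    (M₁ M₂ : ℕ → ℝ)
    (hM₁ : ∀ n, M₁ n ∈ Set.Ioo (0 : ℝ) 1) (hM₂ : ∀ n, M₂ n ∈ Set.Ioo (0 : ℝ) 1)
    (hM₁mono : StrictMono M₁) (hM₂mono : StrictMono M₂)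
    (hM₁lim : Tendsto M₁ atTop (nhds 1)) (hM₂lim : Tendsto M₂ atTop (nhds 1))
    (V : ℕ → Ω → ℝ)
    (hV : ∀ n ω, V n ω = v1eq d₁ d₂ (M₁ n) (M₂ n) (A₁ ω) (A₂ ω))
    (μt σt : ℕ → ℝ)
    (hμt : ∀ n, μt n = (1 / 2) * Real.log ((∫ ω, V n ω ∂P) ^ 4 /
      (variance (V n) P + (∫ ω, V n ω ∂P) ^ 2)))
    (hσt : ∀ n, σt n = Real.sqrt (Real.log (variance (V n) P / (∫ ω, V n ω ∂P) ^ 2 + 1))) :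
    (∃ L : ℝ, Tendsto σt atTop (nhds L)) ∧ Tendsto μt atTop atTop :=
  matched_lognormal_parameters_limit_equity_only_general Ω P Z₁ Z₂ hZ₁m hZ₂m hZ₁ hZ₂ hindep μ₁ μ₂
    c₁₁ c₁₂ c₂₁ c₂₂ hc₁ A₁ A₂ hA₁ hA₂ d₁ d₂ hd₁ hd₂ M₁ M₂ hM₁ hM₂ hM₁lim hM₂lim V hV μt σt hμt hσt
end

section
/- (Lemma A2, precise form.) Under cross-ownership of equity only, for d₁, d₂ > 0 the set A_ss(M₁,M₂) := {(a₁,a₂) ≥ 0 : a₁ + M₁ a₂ ≥ d₁ + M₁ d₂ and M₂ a₁ + a₂ ≥ M₂ d₁ + d₂} is nondecreasing in M₁ ∈ (0,1) and in M₂ ∈ (0,1), and ⋃_{M₁,M₂ ∈ (0,1)} A_ss(M₁,M₂) = {(a₁,a₂) ≥ 0 : a₁ + a₂ > d₁ + d₂} ∪ {(d₁,d₂)}. Consequently, along any sequences M₁,ₙ, M₂,ₙ ∈ (0,1) strictly increasing to 1, the indicator of A_ss(M₁,ₙ, M₂,ₙ) converges pointwise to the indicator of {(a₁,a₂) ≥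 0 : a₁ + a₂ > d₁ + d₂} ∪ {(d₁,d₂)}, which coincides with the indicator of {(a₁,a₂) ≥ 0 : a₁ + a₂ ≥ d₁ + d₂} at every point off the line a₁ + a₂ = d₁ + d₂. -/
open Filter

/-- The Suzuki area `A_ss(M₁,M₂)` under cross-ownership of equity only, as a subset
of the plane. -/
def ssSetEq (d₁ d₂ M₁ M₂ : ℝ) : Set (ℝ × ℝ) :=
  {a | 0 ≤ a.1 ∧ 0 ≤ a.2 ∧ d₁ + M₁ * d₂ ≤ a.1 + M₁ * a.2 ∧
    M₂ * d₁ + d₂ ≤ M₂ * a.1 + a.2}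

/-- The limiting solvency region: `{(a₁,a₂) ≥ 0 : a₁ + a₂ > d₁ + d₂} ∪ {(d₁,d₂)}`. -/
def ssLimSetEq (d₁ d₂ : ℝ) : Set (ℝ × ℝ) :=
  {a | 0 ≤ a.1 ∧ 0 ≤ a.2 ∧ d₁ + d₂ < a.1 + a.2} ∪ {(d₁, d₂)}

/-- Lemma A2, precise form: `A_ss(M₁,M₂)` is nondecreasing in each of
`M₁, M₂ ∈ (0,1)`, its union over `M₁, M₂ ∈ (0,1)` is
`{(a₁,a₂) ≥ 0 : a₁ + a₂ > d₁ + d₂} ∪ {(d₁,d₂)}`; consequently, along sequences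
strictly increasing to 1 the indicator of `A_ss(M₁,ₙ, M₂,ₙ)` converges pointwise to the
indicator of this limiting set, which coincides with the indicator of
`{(a₁,a₂) ≥ 0 : a₁ + a₂ ≥ d₁ + d₂}` off the line `a₁ + a₂ = d₁ + d₂`. -/
theorem ssSetEq_limit (d₁ d₂ : ℝ) (hd₁ : 0 < d₁) (hd₂ : 0 < d₂) :
    (∀ M₁ M₁' M₂ : ℝ, M₁ ∈ Set.Ioo (0 : ℝ) 1 → M₁' ∈ Set.Ioo (0 : ℝ) 1 →
      M₂ ∈ Set.Ioo (0 : ℝ) 1 → M₁ ≤ M₁' →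
      ssSetEq d₁ d₂ M₁ M₂ ⊆ ssSetEq d₁ d₂ M₁' M₂) ∧
    (∀ M₁ M₂ M₂' : ℝ, M₁ ∈ Set.Ioo (0 : ℝ) 1 → M₂ ∈ Set.Ioo (0 : ℝ) 1 →
      M₂' ∈ Set.Ioo (0 : ℝ) 1 → M₂ ≤ M₂' →
      ssSetEq d₁ d₂ M₁ M₂ ⊆ ssSetEq d₁ d₂ M₁ M₂') ∧
    ((⋃ M₁ ∈ Set.Ioo (0 : ℝ) 1, ⋃ M₂ ∈ Set.Ioo (0 : ℝ) 1, ssSetEq d₁ d₂ M₁ M₂) =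
      ssLimSetEq d₁ d₂) ∧
    (∀ M₁ M₂ : ℕ → ℝ, (∀ n, M₁ n ∈ Set.Ioo (0 : ℝ) 1) →
      (∀ n, M₂ n ∈ Set.Ioo (0 : ℝ) 1) → StrictMono M₁ → StrictMono M₂ →
      Tendsto M₁ atTop (nhds 1) → Tendsto M₂ atTop (nhds 1) →
      ∀ a : ℝ × ℝ,
        Tendsto (fun n => (ssSetEq d₁ d₂ (M₁ n) (M₂ n)).indicator
            (fun _ => (1 : ℝ)) a) atTop
          (nhds ((ssLimSetEq d₁ d₂).indicator (fun _ => (1 : ℝ)) a))) ∧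
    (∀ a : ℝ × ℝ, 0 ≤ a.1 → 0 ≤ a.2 → a.1 + a.2 ≠ d₁ + d₂ →
      (ssLimSetEq d₁ d₂).indicator (fun _ => (1 : ℝ)) a =
        ({x : ℝ × ℝ | 0 ≤ x.1 ∧ 0 ≤ x.2 ∧ d₁ + d₂ ≤ x.1 + x.2}).indicator
          (fun _ => (1 : ℝ)) a) := by
  have hmono1 : ∀ M₁ M₁' M₂ : ℝ, M₁ ∈ Set.Ioo (0 : ℝ) 1 → M₁' ∈ Set.Ioo (0 : ℝ) 1 →
      M₂ ∈ Set.Ioo (0 : ℝ) 1 → M₁ ≤ M₁' →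
      ssSetEq d₁ d₂ M₁ M₂ ⊆ ssSetEq d₁ d₂ M₁' M₂ := by
    intro M₁ M₁' M₂ hM₁ hM₁' hM₂ hle a ha
    obtain ⟨h0, h0', h1, h2⟩ := ha
    refine ⟨h0, h0', ?_, h2⟩
    rcases le_or_gt d₂ a.2 with h | h
    · nlinarith [hM₁.1, hM₁'.1]
    · have hx : 0 < a.1 - d₁ := by
        by_contra hc
        push_neg at hc
        nlinarith [mul_nonneg hM₂.1.le (by linarith : (0:ℝ) ≤ d₁ - a.1)]
      nlinarith [mul_pos (by linarith [hM₂.2] : (0:ℝ) < 1 - M₂) hx,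
        mul_pos (by linarith [hM₁'.2] : (0:ℝ) < 1 - M₁')
          (by linarith : (0:ℝ) < d₂ - a.2)]
  have hmono2 : ∀ M₁ M₂ M₂' : ℝ, M₁ ∈ Set.Ioo (0 : ℝ) 1 → M₂ ∈ Set.Ioo (0 : ℝ) 1 →
      M₂' ∈ Set.Ioo (0 : ℝ) 1 → M₂ ≤ M₂' →
      ssSetEq d₁ d₂ M₁ M₂ ⊆ ssSetEq d₁ d₂ M₁ M₂' := by
    intro M₁ M₂ M₂' hM₁ hM₂ hM₂' hle a ha
    obtain ⟨h0, h0', h1, h2⟩ := ha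
    refine ⟨h0, h0', h1, ?_⟩
    rcases le_or_gt d₁ a.1 with h | h
    · nlinarith [hM₂.1, hM₂'.1]
    · have hx : 0 < a.2 - d₂ := by
        by_contra hc
        push_neg at hc
        nlinarith [mul_nonneg hM₁.1.le (by linarith : (0:ℝ) ≤ d₂ - a.2)]
      nlinarith [mul_pos (by linarith [hM₁.2] : (0:ℝ) < 1 - M₁) hx,
        mul_pos (by linarith [hM₂'.2] : (0:ℝ) < 1 - M₂')
          (by linarith : (0:ℝ) < d₁ - a.1)]
  have hunion : (⋃ M₁ ∈ Set.Ioo (0 : ℝ) 1, ⋃ M₂ ∈ Set.Ioo (0 : ℝ) 1,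
      ssSetEq d₁ d₂ M₁ M₂) = ssLimSetEq d₁ d₂ := by
    ext a
    simp only [Set.mem_iUnion, exists_prop]
    constructor
    · rintro ⟨M₁, hM₁, M₂, hM₂, h0, h0', h1, h2⟩
      rcases lt_trichotomy a.2 d₂ with h | h | h
      · left
        exact ⟨h0, h0', by nlinarith [hM₂.1, hM₂.2]⟩
      · rcases eq_or_lt_of_le (show d₁ ≤ a.1 by nlinarith [hM₁.1]) with he | hlt
        · right
          show a = (d₁, d₂)
          exact Prod.ext he.symm h
        · left
          exact ⟨h0, h0', by nlinarith⟩
      · left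
        exact ⟨h0, h0', by nlinarith [hM₁.1, hM₁.2]⟩
    · rintro (⟨h0, h0', hs⟩ | ha)
      · set s : ℝ := a.1 + a.2 - (d₁ + d₂) with hs_def
        have hspos : 0 < s := by simp [hs_def]; linarith
        set D : ℝ := d₁ + d₂ with hD_def
        have hDpos : 0 < D := by positivity
        have hden : 0 < D + s := by linarith
        set M : ℝ := D / (D + s) with hM_def
        have hMIoo : M ∈ Set.Ioo (0 : ℝ) 1 := by
          constructor
          · positivity
          · rw [hM_def, div_lt_one hden]; linarith
        have hMeq : M * (D + s) = D := by
          rw [hM_def]; field_simp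
        refine ⟨M, hMIoo, M, hMIoo, h0, h0', ?_, ?_⟩
        · nlinarith [hMIoo.1, hMIoo.2]
        · nlinarith [hMIoo.1, hMIoo.2]
      · have : a = (d₁, d₂) := ha
        subst this
        exact ⟨1/2, by norm_num, 1/2, by norm_num, hd₁.le, hd₂.le, le_refl _, le_refl _⟩
  refine ⟨hmono1, hmono2, hunion, ?_, ?_⟩
  · intro M₁ M₂ hM₁ hM₂ _ _ hT₁ hT₂ a
    by_cases ha : a ∈ ssLimSetEq d₁ d₂
    · rw [Set.indicator_of_mem ha]
      rw [← hunion] at ha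
      simp only [Set.mem_iUnion, exists_prop] at ha
      obtain ⟨N₁, hN₁, N₂, hN₂, hmem⟩ := ha
      have hev₁ : ∀ᶠ n in atTop, N₁ ≤ M₁ n := hT₁.eventually (eventually_ge_nhds hN₁.2)
      have hev₂ : ∀ᶠ n in atTop, N₂ ≤ M₂ n := hT₂.eventually (eventually_ge_nhds hN₂.2)
      refine Tendsto.congr' ?_ tendsto_const_nhds
      filter_upwards [hev₁, hev₂] with n h1 h2
      have : a ∈ ssSetEq d₁ d₂ (M₁ n) (M₂ n) :=
        hmono2 (M₁ n) N₂ (M₂ n) (hM₁ n) hN₂ (hM₂ n) h2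
          (hmono1 N₁ (M₁ n) N₂ hN₁ (hM₁ n) hN₂ h1 hmem)
      rw [Set.indicator_of_mem this]
    · rw [Set.indicator_of_notMem ha]
      rw [← hunion] at ha
      refine Tendsto.congr' ?_ tendsto_const_nhds
      filter_upwards with n
      have hnot : a ∉ ssSetEq d₁ d₂ (M₁ n) (M₂ n) := fun hmem => ha (by
        simp only [Set.mem_iUnion, exists_prop]
        exact ⟨M₁ n, hM₁ n, M₂ n, hM₂ n, hmem⟩)
      rw [Set.indicator_of_notMem hnot]
  · intro a h0 h0' hne
    rcases lt_or_gt_of_ne hne with h | h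
    · rw [Set.indicator_of_notMem, Set.indicator_of_notMem]
      · intro hmem
        exact absurd hmem.2.2 (by linarith)
      · intro hmem
        rcases hmem with ⟨_, _, hlt⟩ | he
        · linarith
        · have : a = (d₁, d₂) := he
          apply hne
          rw [this]
    · rw [Set.indicator_of_mem, Set.indicator_of_mem]
      · exact ⟨h0, h0', h.le⟩
      · left; exact ⟨h0, h0', h⟩
end

section
/- (Lemma A4.) Under cross-ownership of debt only with d₁, d₂ > 0, let A*_dd, A*_sd, A*_ds denote the sets whose indicators are the pointwise limits of the indicators of A_dd, A_sd, A_ds along sequences M₁,ₙ, M₂,ₙ ∈ (0,1) strictly increasing to 1 (these limits exist). Then: A*_dd = {(0,0)}; A*_sd = ∅ if d₂ < d₁, and A*_sd = {(a₁,a₂) ≥ 0 : a₁ + a₂ > 0 and a₂ ≤ d₂ − d₁} if d₂ ≥ d₁; A*_ds = ∅ if d₁ < d₂, and A*_ds = {(a₁,a₂) ≥ 0 : a₁ + a₂ > 0 and a₁ ≤ d₁ − d₂} if d₁ ≥ d₂. In particular, if d₁ = d₂ then A*_sd = {(a₁,0) : a₁ > 0} and A*_ds = {(0,a₂) : a₂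 > 0}. -/
open Filter

/-- The nonnegative quadrant. -/
def quadrant : Set (ℝ × ℝ) := {a | 0 ≤ a.1 ∧ 0 ≤ a.2}

/-- Suzuki area `A_ss` under cross-ownership of debt only. -/
def ssSetD (d₁ d₂ M₁ M₂ : ℝ) : Set (ℝ × ℝ) :=
  {a | 0 ≤ a.1 ∧ 0 ≤ a.2 ∧ d₁ - M₁ * d₂ ≤ a.1 ∧ d₂ - M₂ * d₁ ≤ a.2}

/-- First (nondecreasing) half-plane defining `A_sd` under cross-ownership of debt only. -/
def sdSetD₁ (d₁ M₁ M₂ : ℝ) : Set (ℝ × ℝ) :=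
  {a | (1 - M₁ * M₂) * d₁ ≤ a.1 + M₁ * a.2}

/-- Second (nonincreasing) half-plane defining `A_sd` under cross-ownership of debt only. -/
def sdSetD₂ (d₁ d₂ M₂ : ℝ) : Set (ℝ × ℝ) :=
  {a | a.2 < d₂ - M₂ * d₁}

/-- Suzuki area `A_sd` under cross-ownership of debt only. -/
def sdSetD (d₁ d₂ M₁ M₂ : ℝ) : Set (ℝ × ℝ) :=
  quadrant ∩ (sdSetD₁ d₁ M₁ M₂ ∩ sdSetD₂ d₁ d₂ M₂)

/-- First (nonincreasing) half-plane defining `A_ds` under cross-ownership of debt only. -/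
def dsSetD₁ (d₁ d₂ M₁ : ℝ) : Set (ℝ × ℝ) :=
  {a | a.1 < d₁ - M₁ * d₂}

/-- Second (nondecreasing) half-plane defining `A_ds` under cross-ownership of debt only. -/
def dsSetD₂ (d₂ M₁ M₂ : ℝ) : Set (ℝ × ℝ) :=
  {a | (1 - M₁ * M₂) * d₂ ≤ M₂ * a.1 + a.2}

/-- Suzuki area `A_ds` under cross-ownership of debt only. -/
def dsSetD (d₁ d₂ M₁ M₂ : ℝ) : Set (ℝ × ℝ) :=
  quadrant ∩ (dsSetD₁ d₁ d₂ M₁ ∩ dsSetD₂ d₂ M₁ M₂)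

/-- Suzuki area `A_dd` under cross-ownership of debt only. -/
def ddSetD (d₁ d₂ M₁ M₂ : ℝ) : Set (ℝ × ℝ) :=
  {a | 0 ≤ a.1 ∧ 0 ≤ a.2 ∧ a.1 + M₁ * a.2 < (1 - M₁ * M₂) * d₁ ∧
    M₂ * a.1 + a.2 < (1 - M₁ * M₂) * d₂}

/-- The limiting set `A*_sd` when `d₂ ≥ d₁`. -/
def sdLimSetD (d₁ d₂ : ℝ) : Set (ℝ × ℝ) :=
  {a | 0 ≤ a.1 ∧ 0 ≤ a.2 ∧ 0 < a.1 + a.2 ∧ a.2 ≤ d₂ - d₁}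

/-- The limiting set `A*_ds` when `d₁ ≥ d₂`. -/
def dsLimSetD (d₁ d₂ : ℝ) : Set (ℝ × ℝ) :=
  {a | 0 ≤ a.1 ∧ 0 ≤ a.2 ∧ 0 < a.1 + a.2 ∧ a.1 ≤ d₁ - d₂}

lemma indicator_tendsto_of_eventually {S : ℕ → Set (ℝ × ℝ)} {L : Set (ℝ × ℝ)} {a : ℝ × ℝ}
    (h : ∀ᶠ n in atTop, (a ∈ S n ↔ a ∈ L)) :
    Tendsto (fun n => (S n).indicator (fun _ => (1 : ℝ)) a) atTop
      (nhds (L.indicator (fun _ => (1 : ℝ)) a)) := by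
  apply Tendsto.congr' _ tendsto_const_nhds
  filter_upwards [h] with n hn
  by_cases ha : a ∈ L
  · simp [Set.indicator_of_mem ha, Set.indicator_of_mem (hn.mpr ha)]
  · simp [Set.indicator_of_notMem ha, Set.indicator_of_notMem (fun hs => ha (hn.mp hs))]

/-- Lemma A4: under cross-ownership of debt only, along sequences of
fractions strictly increasing to 1, the indicators of `A_dd`, `A_sd`, `A_ds` converge
pointwise to the indicators of `{(0,0)}`, `A*_sd`, `A*_ds` respectively, where
`A*_sd = ∅` if `d₂ < d₁` and `A*_sd = {(a₁,a₂) ≥ 0 : a₁ + a₂ > 0, a₂ ≤ d₂ − d₁}` if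
`d₂ ≥ d₁` (symmetrically for `A*_ds`); for `d₁ = d₂` these are the strictly positive
`a₁`- and `a₂`-axes. -/
theorem debt_only_limit_areas
    (d₁ d₂ : ℝ) (hd₁ : 0 < d₁) (hd₂ : 0 < d₂)
    (M₁ M₂ : ℕ → ℝ)
    (hM₁ : ∀ n, M₁ n ∈ Set.Ioo (0 : ℝ) 1) (hM₂ : ∀ n, M₂ n ∈ Set.Ioo (0 : ℝ) 1)
    (hM₁mono : StrictMono M₁) (hM₂mono : StrictMono M₂)
    (hM₁lim : Tendsto M₁ atTop (nhds 1)) (hM₂lim : Tendsto M₂ atTop (nhds 1)) :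
    (∀ a : ℝ × ℝ,
      Tendsto (fun n => (ddSetD d₁ d₂ (M₁ n) (M₂ n)).indicator (fun _ => (1 : ℝ)) a)
        atTop (nhds (({((0 : ℝ), (0 : ℝ))} : Set (ℝ × ℝ)).indicator (fun _ => (1 : ℝ)) a))) ∧
    (d₂ < d₁ → ∀ a : ℝ × ℝ,
      Tendsto (fun n => (sdSetD d₁ d₂ (M₁ n) (M₂ n)).indicator (fun _ => (1 : ℝ)) a)
        atTop (nhds ((∅ : Set (ℝ × ℝ)).indicator (fun _ => (1 : ℝ)) a))) ∧
    (d₁ ≤ d₂ → ∀ a : ℝ × ℝ,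
      Tendsto (fun n => (sdSetD d₁ d₂ (M₁ n) (M₂ n)).indicator (fun _ => (1 : ℝ)) a)
        atTop (nhds ((sdLimSetD d₁ d₂).indicator (fun _ => (1 : ℝ)) a))) ∧
    (d₁ < d₂ → ∀ a : ℝ × ℝ,
      Tendsto (fun n => (dsSetD d₁ d₂ (M₁ n) (M₂ n)).indicator (fun _ => (1 : ℝ)) a)
        atTop (nhds ((∅ : Set (ℝ × ℝ)).indicator (fun _ => (1 : ℝ)) a))) ∧
    (d₂ ≤ d₁ → ∀ a : ℝ × ℝ,
      Tendsto (fun n => (dsSetD d₁ d₂ (M₁ n) (M₂ n)).indicator (fun _ => (1 : ℝ)) a)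
        atTop (nhds ((dsLimSetD d₁ d₂).indicator (fun _ => (1 : ℝ)) a))) ∧
    (d₁ = d₂ →
      sdLimSetD d₁ d₂ = {a : ℝ × ℝ | 0 < a.1 ∧ a.2 = 0} ∧
      dsLimSetD d₁ d₂ = {a : ℝ × ℝ | a.1 = 0 ∧ 0 < a.2}) := by
  have hprod : Tendsto (fun n => M₁ n * M₂ n) atTop (nhds 1) := by
    have := hM₁lim.mul hM₂lim; simpa using this
  have hone : Tendsto (fun _ : ℕ => (1 : ℝ)) atTop (nhds 1) := tendsto_const_nhds
  have hz₁ : Tendsto (fun n => (1 - M₁ n * M₂ n) * d₁) atTop (nhds 0) := by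
    have := (hone.sub hprod).mul (tendsto_const_nhds (x := d₁)); simpa using this
  have hz₂ : Tendsto (fun n => (1 - M₁ n * M₂ n) * d₂) atTop (nhds 0) := by
    have := (hone.sub hprod).mul (tendsto_const_nhds (x := d₂)); simpa using this
  have hpos : ∀ n (d : ℝ), 0 < d → 0 < (1 - M₁ n * M₂ n) * d := by
    intro n d hd
    have h1 := hM₁ n; have h2 := hM₂ n
    simp only [Set.mem_Ioo] at h1 h2
    have hm : M₁ n * M₂ n < 1 := by nlinarith [h1.1, h1.2, h2.1, h2.2]
    exact mul_pos (by linarith) hd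
  refine ⟨?_, ?_, ?_, ?_, ?_, ?_⟩
  · -- dd case
    intro a
    apply indicator_tendsto_of_eventually
    by_cases ha : a ∈ ({((0 : ℝ), (0 : ℝ))} : Set (ℝ × ℝ))
    · apply Filter.Eventually.of_forall
      intro n
      simp only [Set.mem_singleton_iff] at ha
      simp [ddSetD, ha, hpos n d₁ hd₁, hpos n d₂ hd₂, Set.mem_setOf_eq]
    · have hnot : a ∉ ({((0 : ℝ), (0 : ℝ))} : Set (ℝ × ℝ)) := ha
      simp only [Set.mem_singleton_iff, Prod.ext_iff] at ha
      by_cases h1 : 0 ≤ a.1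
      · by_cases h2 : 0 ≤ a.2
        · -- a ≥ 0, a ≠ 0
          by_cases h3 : 0 < a.1
          · have hgl : Tendsto (fun n => a.1 + M₁ n * a.2) atTop (nhds (a.1 + a.2)) := by
              have := (tendsto_const_nhds (x := a.1)).add (hM₁lim.mul (tendsto_const_nhds (x := a.2)))
              simpa using this
            have hev := hz₁.eventually_lt hgl (by linarith)
            filter_upwards [hev] with n hn
            refine iff_of_false ?_ hnot
            rintro ⟨-, -, hc, -⟩; linarith
          · have ha1 : a.1 = 0 := le_antisymm (not_lt.mp h3) h1
            have h4 : 0 < a.2 := by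
              rcases lt_or_eq_of_le h2 with h | h
              · exact h
              · exact absurd ⟨ha1, h.symm⟩ ha
            have hgl : Tendsto (fun n => M₂ n * a.1 + a.2) atTop (nhds (a.1 + a.2)) := by
              have := (hM₂lim.mul (tendsto_const_nhds (x := a.1))).add (tendsto_const_nhds (x := a.2))
              simpa [ha1] using this
            have hev := hz₂.eventually_lt hgl (by linarith)
            filter_upwards [hev] with n hn
            refine iff_of_false ?_ hnot
            rintro ⟨-, -, -, hc⟩; linarith
        · apply Filter.Eventually.of_forall
          intro n
          refine iff_of_false ?_ hnot
          rintro ⟨-, hc, -⟩; exact h2 hc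
      · apply Filter.Eventually.of_forall
        intro n
        refine iff_of_false ?_ hnot
        rintro ⟨hc, -⟩; exact h1 hc
  · -- sd, d₂ < d₁ : empty limit
    intro hlt a
    apply indicator_tendsto_of_eventually
    by_cases h2 : 0 ≤ a.2
    · have hdl : Tendsto (fun n => d₂ - M₂ n * d₁) atTop (nhds (d₂ - d₁)) := by
        have := (tendsto_const_nhds (x := d₂)).sub (hM₂lim.mul (tendsto_const_nhds (x := d₁)))
        simpa using this
      have hev := hdl.eventually_lt (tendsto_const_nhds (x := a.2)) (by linarith)
      filter_upwards [hev] with n hn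
      simp only [sdSetD, sdSetD₂, quadrant, Set.mem_inter_iff, Set.mem_setOf_eq,
        Set.mem_empty_iff_false, iff_false]
      rintro ⟨-, -, hc⟩; linarith
    · apply Filter.Eventually.of_forall
      intro n
      simp only [sdSetD, quadrant, Set.mem_inter_iff, Set.mem_setOf_eq,
        Set.mem_empty_iff_false, iff_false]
      rintro ⟨⟨-, hc⟩, -⟩; exact h2 hc
  · -- sd, d₁ ≤ d₂
    intro hle a
    apply indicator_tendsto_of_eventually
    by_cases ha : a ∈ sdLimSetD d₁ d₂
    · obtain ⟨h1, h2, h3, h4⟩ := ha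
      have hgl : Tendsto (fun n => a.1 + M₁ n * a.2) atTop (nhds (a.1 + a.2)) := by
        have := (tendsto_const_nhds (x := a.1)).add (hM₁lim.mul (tendsto_const_nhds (x := a.2)))
        simpa using this
      have hev := hz₁.eventually_lt hgl h3
      filter_upwards [hev] with n hn
      have hm := hM₂ n; simp only [Set.mem_Ioo] at hm
      simp only [sdSetD, sdSetD₁, sdSetD₂, quadrant, Set.mem_inter_iff, Set.mem_setOf_eq]
      constructor
      · intro _; exact ⟨h1, h2, h3, h4⟩
      · intro _
        refine ⟨⟨h1, h2⟩, le_of_lt hn, ?_⟩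
        nlinarith [hm.2]
    · simp only [sdLimSetD, Set.mem_setOf_eq, not_and, not_le, not_lt] at ha
      by_cases h1 : 0 ≤ a.1
      · by_cases h2 : 0 ≤ a.2
        · by_cases h3 : 0 < a.1 + a.2
          · have h4 : d₂ - d₁ < a.2 := ha h1 h2 h3
            have hdl : Tendsto (fun n => d₂ - M₂ n * d₁) atTop (nhds (d₂ - d₁)) := by
              have := (tendsto_const_nhds (x := d₂)).sub (hM₂lim.mul (tendsto_const_nhds (x := d₁)))
              simpa using this
            have hev := hdl.eventually_lt (tendsto_const_nhds (x := a.2)) h4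
            filter_upwards [hev] with n hn
            simp only [sdSetD, sdSetD₂, quadrant, Set.mem_inter_iff, Set.mem_setOf_eq,
              sdLimSetD]
            constructor
            · rintro ⟨-, -, hc⟩; linarith
            · rintro ⟨-, -, -, hc⟩; linarith
          · have ha1 : a.1 = 0 := by linarith [not_lt.mp h3]
            have ha2 : a.2 = 0 := by linarith [not_lt.mp h3]
            apply Filter.Eventually.of_forall
            intro n
            simp only [sdSetD, sdSetD₁, quadrant, Set.mem_inter_iff, Set.mem_setOf_eq, sdLimSetD]
            constructor
            · rintro ⟨-, hc, -⟩
              rw [ha1, ha2] at hc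
              exact absurd hc (by simpa using not_le.mpr (hpos n d₁ hd₁))
            · rintro ⟨-, -, hc, -⟩; rw [ha1, ha2] at hc; linarith
        · apply Filter.Eventually.of_forall
          intro n
          simp only [sdSetD, quadrant, Set.mem_inter_iff, Set.mem_setOf_eq, sdLimSetD]
          constructor
          · rintro ⟨⟨-, hc⟩, -⟩; exact absurd hc h2
          · rintro ⟨-, hc, -⟩; exact absurd hc h2
      · apply Filter.Eventually.of_forall
        intro n
        simp only [sdSetD, quadrant, Set.mem_inter_iff, Set.mem_setOf_eq, sdLimSetD]
        constructor
        · rintro ⟨⟨hc, -⟩, -⟩; exact absurd hc h1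
        · rintro ⟨hc, -⟩; exact absurd hc h1
  · -- ds, d₁ < d₂ : empty limit
    intro hlt a
    apply indicator_tendsto_of_eventually
    by_cases h1 : 0 ≤ a.1
    · have hdl : Tendsto (fun n => d₁ - M₁ n * d₂) atTop (nhds (d₁ - d₂)) := by
        have := (tendsto_const_nhds (x := d₁)).sub (hM₁lim.mul (tendsto_const_nhds (x := d₂)))
        simpa using this
      have hev := hdl.eventually_lt (tendsto_const_nhds (x := a.1)) (by linarith)
      filter_upwards [hev] with n hn
      simp only [dsSetD, dsSetD₁, quadrant, Set.mem_inter_iff, Set.mem_setOf_eq,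
        Set.mem_empty_iff_false, iff_false]
      rintro ⟨-, hc, -⟩; linarith
    · apply Filter.Eventually.of_forall
      intro n
      simp only [dsSetD, quadrant, Set.mem_inter_iff, Set.mem_setOf_eq,
        Set.mem_empty_iff_false, iff_false]
      rintro ⟨⟨hc, -⟩, -⟩; exact h1 hc
  · -- ds, d₂ ≤ d₁
    intro hle a
    apply indicator_tendsto_of_eventually
    by_cases ha : a ∈ dsLimSetD d₁ d₂
    · obtain ⟨h1, h2, h3, h4⟩ := ha
      have hgl : Tendsto (fun n => M₂ n * a.1 + a.2) atTop (nhds (a.1 + a.2)) := by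
        have := (hM₂lim.mul (tendsto_const_nhds (x := a.1))).add (tendsto_const_nhds (x := a.2))
        simpa using this
      have hev := hz₂.eventually_lt hgl h3
      filter_upwards [hev] with n hn
      have hm := hM₁ n; simp only [Set.mem_Ioo] at hm
      simp only [dsSetD, dsSetD₁, dsSetD₂, quadrant, Set.mem_inter_iff, Set.mem_setOf_eq]
      constructor
      · intro _; exact ⟨h1, h2, h3, h4⟩
      · intro _
        refine ⟨⟨h1, h2⟩, ?_, le_of_lt hn⟩
        nlinarith [hm.2]
    · simp only [dsLimSetD, Set.mem_setOf_eq, not_and, not_le, not_lt] at ha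
      by_cases h1 : 0 ≤ a.1
      · by_cases h2 : 0 ≤ a.2
        · by_cases h3 : 0 < a.1 + a.2
          · have h4 : d₁ - d₂ < a.1 := ha h1 h2 h3
            have hdl : Tendsto (fun n => d₁ - M₁ n * d₂) atTop (nhds (d₁ - d₂)) := by
              have := (tendsto_const_nhds (x := d₁)).sub (hM₁lim.mul (tendsto_const_nhds (x := d₂)))
              simpa using this
            have hev := hdl.eventually_lt (tendsto_const_nhds (x := a.1)) h4
            filter_upwards [hev] with n hn
            simp only [dsSetD, dsSetD₁, quadrant, Set.mem_inter_iff, Set.mem_setOf_eq,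
              dsLimSetD]
            constructor
            · rintro ⟨-, hc, -⟩; linarith
            · rintro ⟨-, -, -, hc⟩; linarith
          · have ha1 : a.1 = 0 := by linarith [not_lt.mp h3]
            have ha2 : a.2 = 0 := by linarith [not_lt.mp h3]
            apply Filter.Eventually.of_forall
            intro n
            simp only [dsSetD, dsSetD₂, quadrant, Set.mem_inter_iff, Set.mem_setOf_eq, dsLimSetD]
            constructor
            · rintro ⟨-, -, hc⟩
              rw [ha1, ha2] at hc
              exact absurd hc (by simpa using not_le.mpr (hpos n d₂ hd₂))
            · rintro ⟨-, -, hc, -⟩; rw [ha1, ha2] at hc; linarith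
        · apply Filter.Eventually.of_forall
          intro n
          simp only [dsSetD, quadrant, Set.mem_inter_iff, Set.mem_setOf_eq, dsLimSetD]
          constructor
          · rintro ⟨⟨-, hc⟩, -⟩; exact absurd hc h2
          · rintro ⟨-, hc, -⟩; exact absurd hc h2
      · apply Filter.Eventually.of_forall
        intro n
        simp only [dsSetD, quadrant, Set.mem_inter_iff, Set.mem_setOf_eq, dsLimSetD]
        constructor
        · rintro ⟨⟨hc, -⟩, -⟩; exact absurd hc h1
        · rintro ⟨hc, -⟩; exact absurd hc h1
  · -- d₁ = d₂
    intro heq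
    constructor
    · ext a
      simp only [sdLimSetD, Set.mem_setOf_eq, heq]
      constructor
      · rintro ⟨h1, h2, h3, h4⟩
        have : a.2 = 0 := le_antisymm (by linarith) h2
        exact ⟨by linarith, this⟩
      · rintro ⟨h1, h2⟩
        exact ⟨le_of_lt h1, le_of_eq h2.symm, by linarith, by linarith⟩
    · ext a
      simp only [dsLimSetD, Set.mem_setOf_eq, heq]
      constructor
      · rintro ⟨h1, h2, h3, h4⟩
        have : a.1 = 0 := le_antisymm (by linarith) h1
        exact ⟨this, by linarith⟩
      · rintro ⟨h1, h2⟩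
        exact ⟨le_of_eq h1.symm, le_of_lt h2, by linarith, by linarith⟩
end

section
/- (Pointwise limit of the firm value under cross-ownership of debt.) Let d₁, d₂ > 0, let M₁,ₙ, M₂,ₙ ∈ (0,1) be sequences strictly increasing to 1, and let v₁,ₙ be the value of firm 1 under cross-ownership of debt only with fractions (M₁,ₙ, M₂,ₙ). Then for every (a₁,a₂) ≥ 0 with a₁ + a₂ > 0: if d₁ ≥ d₂ then v₁,ₙ(a₁,a₂) → a₁ + d₂; if d₁ < d₂ then v₁,ₙ(a₁,a₂) → a₁ + d₂ when a₂ > d₂ − d₁, and v₁,ₙ(a₁,a₂) → a₁ + a₂ + d₁ when a₂ ≤ d₂ − d₁. Moreover v₁,ₙ(0,0) → 0. -/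
open Filter

open Classical in
/-- The value of firm 1 under cross-ownership of debt only, as a (piecewise-defined)
derivative of the exogenous asset values `(a₁, a₂)`: it equals `a₁ + M₁ d₂` on
`A_ss ∪ A_ds`, `a₁ + M₁ a₂ + M₁ M₂ d₁` on `A_sd`, and
`(a₁ + M₁ a₂)/(1 − M₁ M₂)` on `A_dd`. -/
noncomputable def v1debt (d₁ d₂ M₁ M₂ a₁ a₂ : ℝ) : ℝ :=
  if (d₁ - M₁ * d₂ ≤ a₁ ∧ d₂ - M₂ * d₁ ≤ a₂) ∨
     (a₁ < d₁ - M₁ * d₂ ∧ (1 - M₁ * M₂) * d₂ ≤ M₂ * a₁ + a₂) then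
    a₁ + M₁ * d₂
  else if (1 - M₁ * M₂) * d₁ ≤ a₁ + M₁ * a₂ ∧ a₂ < d₂ - M₂ * d₁ then
    a₁ + M₁ * a₂ + M₁ * M₂ * d₁
  else (a₁ + M₁ * a₂) / (1 - M₁ * M₂)

/-- pointwise limit of the value of firm 1 under cross-ownership of debt
only, as the fractions increase strictly to 1: away from the origin it converges to
`a₁ + d₂` (resp. `a₁ + a₂ + d₁` if `d₁ < d₂` and `a₂ ≤ d₂ − d₁`), and at the origin it
converges to `0`. -/
theorem v1debt_pointwise_limit
    (d₁ d₂ : ℝ) (hd₁ : 0 < d₁) (hd₂ : 0 < d₂)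
    (M₁ M₂ : ℕ → ℝ)
    (hM₁ : ∀ n, M₁ n ∈ Set.Ioo (0 : ℝ) 1) (hM₂ : ∀ n, M₂ n ∈ Set.Ioo (0 : ℝ) 1)
    (hM₁mono : StrictMono M₁) (hM₂mono : StrictMono M₂)
    (hM₁lim : Tendsto M₁ atTop (nhds 1)) (hM₂lim : Tendsto M₂ atTop (nhds 1)) :
    (∀ a₁ a₂ : ℝ, 0 ≤ a₁ → 0 ≤ a₂ → 0 < a₁ + a₂ →
      (d₂ ≤ d₁ →
        Tendsto (fun n => v1debt d₁ d₂ (M₁ n) (M₂ n) a₁ a₂) atTop (nhds (a₁ + d₂))) ∧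
      (d₁ < d₂ →
        (d₂ - d₁ < a₂ →
          Tendsto (fun n => v1debt d₁ d₂ (M₁ n) (M₂ n) a₁ a₂) atTop (nhds (a₁ + d₂))) ∧
        (a₂ ≤ d₂ - d₁ →
          Tendsto (fun n => v1debt d₁ d₂ (M₁ n) (M₂ n) a₁ a₂) atTop
            (nhds (a₁ + a₂ + d₁))))) ∧
    Tendsto (fun n => v1debt d₁ d₂ (M₁ n) (M₂ n) 0 0) atTop (nhds 0) := by
  constructor
  · intro a₁ a₂ ha₁ ha₂ hsum
    -- Case 1 helper: limit a₁ + d₂ when d₂ - d₁ < a₂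
    have H1 : d₂ - d₁ < a₂ →
        Tendsto (fun n => v1debt d₁ d₂ (M₁ n) (M₂ n) a₁ a₂) atTop (nhds (a₁ + d₂)) := by
      intro h
      have hev1 : ∀ᶠ n in atTop, d₂ - M₂ n * d₁ < a₂ := by
        have ht : Tendsto (fun n => d₂ - M₂ n * d₁) atTop (nhds (d₂ - 1 * d₁)) :=
          tendsto_const_nhds.sub (hM₂lim.mul tendsto_const_nhds)
        exact ht.eventually_lt_const (by linarith)
      have hev2 : ∀ᶠ n in atTop, (1 - M₁ n * M₂ n) * d₂ < M₂ n * a₁ + a₂ := by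
        have ht : Tendsto (fun n => M₂ n * a₁ + a₂ - (1 - M₁ n * M₂ n) * d₂) atTop
            (nhds (1 * a₁ + a₂ - (1 - 1 * 1) * d₂)) :=
          ((hM₂lim.mul tendsto_const_nhds).add tendsto_const_nhds).sub
            ((tendsto_const_nhds.sub (hM₁lim.mul hM₂lim)).mul tendsto_const_nhds)
        have := ht.eventually_const_lt (show (0:ℝ) < 1 * a₁ + a₂ - (1 - 1 * 1) * d₂ by linarith)
        filter_upwards [this] with n hn
        linarith
      have heq : ∀ᶠ n in atTop,
          v1debt d₁ d₂ (M₁ n) (M₂ n) a₁ a₂ = a₁ + M₁ n * d₂ := by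
        filter_upwards [hev1, hev2] with n h1 h2
        unfold v1debt
        rw [if_pos]
        rcases le_or_gt (d₁ - M₁ n * d₂) a₁ with hle | hlt
        · exact Or.inl ⟨hle, h1.le⟩
        · exact Or.inr ⟨hlt, h2.le⟩
      have ht : Tendsto (fun n => a₁ + M₁ n * d₂) atTop (nhds (a₁ + 1 * d₂)) :=
        tendsto_const_nhds.add (hM₁lim.mul tendsto_const_nhds)
      rw [show a₁ + d₂ = a₁ + 1 * d₂ by ring]
      exact ht.congr' (Filter.EventuallyEq.symm heq)
    -- sd-branch helper: limit a₁ + a₂ + d₁ when a₂ ≤ d₂ - d₁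
    have Hsd : a₂ ≤ d₂ - d₁ →
        Tendsto (fun n => v1debt d₁ d₂ (M₁ n) (M₂ n) a₁ a₂) atTop (nhds (a₁ + a₂ + d₁)) := by
      intro h
      have hlt : d₁ - d₂ < a₁ := by
        cases lt_or_eq_of_le ha₂ with
        | inl h2 => linarith
        | inr h2 => linarith
      have hevds : ∀ᶠ n in atTop, d₁ - M₁ n * d₂ < a₁ := by
        have ht : Tendsto (fun n => d₁ - M₁ n * d₂) atTop (nhds (d₁ - 1 * d₂)) :=
          tendsto_const_nhds.sub (hM₁lim.mul tendsto_const_nhds)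
        exact ht.eventually_lt_const (by linarith)
      have hevsd : ∀ᶠ n in atTop, (1 - M₁ n * M₂ n) * d₁ ≤ a₁ + M₁ n * a₂ := by
        have ht : Tendsto (fun n => a₁ + M₁ n * a₂ - (1 - M₁ n * M₂ n) * d₁) atTop
            (nhds (a₁ + 1 * a₂ - (1 - 1 * 1) * d₁)) :=
          (tendsto_const_nhds.add (hM₁lim.mul tendsto_const_nhds)).sub
            ((tendsto_const_nhds.sub (hM₁lim.mul hM₂lim)).mul tendsto_const_nhds)
        have := ht.eventually_const_lt (show (0:ℝ) < a₁ + 1 * a₂ - (1 - 1 * 1) * d₁ by linarith)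
        filter_upwards [this] with n hn
        linarith
      have heq : ∀ᶠ n in atTop,
          v1debt d₁ d₂ (M₁ n) (M₂ n) a₁ a₂ = a₁ + M₁ n * a₂ + M₁ n * M₂ n * d₁ := by
        filter_upwards [hevds, hevsd] with n h1 h2
        have hM2 := hM₂ n
        have hss : a₂ < d₂ - M₂ n * d₁ := by nlinarith [hM2.1, hM2.2]
        unfold v1debt
        rw [if_neg, if_pos ⟨h2, hss⟩]
        rintro (⟨h3, h4⟩ | ⟨h3, h4⟩)
        · linarith
        · linarith
      have ht : Tendsto (fun n => a₁ + M₁ n * a₂ + M₁ n * M₂ n * d₁) atTop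
          (nhds (a₁ + 1 * a₂ + 1 * 1 * d₁)) :=
        (tendsto_const_nhds.add (hM₁lim.mul tendsto_const_nhds)).add
          ((hM₁lim.mul hM₂lim).mul tendsto_const_nhds)
      rw [show a₁ + a₂ + d₁ = a₁ + 1 * a₂ + 1 * 1 * d₁ by ring]
      exact ht.congr' (Filter.EventuallyEq.symm heq)
    refine ⟨fun hdle => ?_, fun hdlt => ⟨H1, Hsd⟩⟩
    rcases lt_or_ge (d₂ - d₁) a₂ with hc | hc
    · exact H1 hc
    · have h1 : a₂ = 0 := le_antisymm (by linarith) ha₂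
      have h2 : d₁ = d₂ := by linarith
      rw [show a₁ + d₂ = a₁ + a₂ + d₁ by rw [h1, h2]; ring]
      exact Hsd hc
  · have h0 : ∀ n, v1debt d₁ d₂ (M₁ n) (M₂ n) 0 0 = 0 := by
      intro n
      obtain ⟨h1, h2⟩ := hM₁ n
      obtain ⟨h3, h4⟩ := hM₂ n
      have hM : M₁ n * M₂ n < 1 := by nlinarith
      unfold v1debt
      rw [if_neg, if_neg]
      · simp
      · rintro ⟨h5, h6⟩; nlinarith
      · rintro (⟨h5, h6⟩ | ⟨h5, h6⟩) <;> nlinarith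
    simp only [h0]; exact (tendsto_const_nhds : Tendsto (fun _ : ℕ => (0:ℝ)) atTop (nhds 0))
end

section
/- (Overestimation under cross-ownership of debt when d₁ ≤ d₂.) Let 0 < d₁ ≤ d₂, let (A₁,A₂) be a random vector with P((A₁,A₂) ∈ (0,∞)²) = 1, let M₁,ₙ, M₂,ₙ ∈ (0,1) be sequences strictly increasing to 1, and let V₁,ₙ := v₁,ₙ(A₁,A₂) be the value of firm 1 under cross-ownership of debt only with fractions (M₁,ₙ, M₂,ₙ). Then limₙ P(V₁,ₙ < d₁) = 0, while every lognormal random variable W satisfies P(W < d₁) > 0; in particular the moment-matched lognormal model overestimates the limiting probability of default of firm 1. -/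
/-!
On the event `{A₁ > 0, A₂ ≥ 0}` firm 1 is solvent as soon as `A₁ ≥ d₁ (1 - M₁ M₂)`: the
threshold vanishes as both fractions tend to `1`, so by continuity of measure the default
probability is squeezed by `P(A₁ < c) → P(A₁ ≤ 0) = 0` as `c ↓ 0`. A lognormal law, in contrast,
is equivalent to Lebesgue measure on `(0, ∞)` and charges every interval `(0, d₁)`.
-/

open Filter

open MeasureTheory

open Topology Set

theorem le_v1debt_of_mul_one_sub_le {d₁ d₂ M₁ M₂ a₁ a₂ : ℝ} (hd₁ : 0 ≤ d₁) (hd : d₁ ≤ d₂)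
    (hM₁ : 0 ≤ M₁) (hM₂ : M₂ ≤ 1) (hM : M₁ * M₂ < 1) (ha₂ : 0 ≤ a₂)
    (ha₁ : d₁ * (1 - M₁ * M₂) ≤ a₁) :
    d₁ ≤ v1debt d₁ d₂ M₁ M₂ a₁ a₂ := by
  have hMa : 0 ≤ M₁ * a₂ := mul_nonneg hM₁ ha₂
  unfold v1debt
  split_ifs with h_solvent h_sd
  · rcases h_solvent with ⟨h, -⟩ | -
    · linarith
    -- on `A_ds` solvency needs `M₂ d₁ ≤ d₂`: this is where `d₁ ≤ d₂` enters
    · nlinarith [mul_nonneg hM₁ (by nlinarith : (0 : ℝ) ≤ d₂ - M₂ * d₁)]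
  · linarith [h_sd.1]
  · rw [le_div_iff₀ (by linarith)]
    linarith

theorem tendsto_measure_setOf_lt_nhdsGT {Ω : Type*} [MeasurableSpace Ω] (μ : Measure Ω)
    [IsFiniteMeasure μ] {X : Ω → ℝ} (hX : Measurable X) (a : ℝ) :
    Tendsto (fun c => μ {ω | X ω < c}) (𝓝[>] a) (𝓝 (μ {ω | X ω ≤ a})) := by
  have h_inter : (⋂ c > a, {ω | X ω < c}) = {ω | X ω ≤ a} := by
    ext ω
    simp only [mem_iInter, mem_ofPred_eq]
    exact ⟨fun h => le_of_forall_gt_imp_ge_of_dense fun c hc => (h c hc).le,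
      fun h c hc => h.trans_lt hc⟩
  rw [← h_inter]
  exact tendsto_measure_biInter_gt
    (fun c _ => (measurableSet_lt hX measurable_const).nullMeasurableSet)
    (fun c c' _ hcc' ω hω => lt_of_lt_of_le hω hcc') ⟨a + 1, by linarith, measure_ne_top _ _⟩

theorem gaussianReal_map_exp_Iio_pos (m : ℝ) {v : NNReal} (hv : v ≠ 0) {q : ℝ} (hq : 0 < q) :
    0 < ((ProbabilityTheory.gaussianReal m v).map Real.exp) (Iio q) := by
  have h_preimage : Real.exp ⁻¹' Iio q = Iio (Real.log q) := by
    ext x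
    simp [Real.lt_log_iff_exp_lt hq]
  rw [Measure.map_apply Real.measurable_exp measurableSet_Iio, h_preimage, pos_iff_ne_zero]
  intro h_null
  simpa [Real.volume_Iio] using ProbabilityTheory.gaussianReal_absolutelyContinuous' m hv h_null

theorem lognormal_overestimates_limiting_default_probability_debt_only_general
    (Ω : Type) [MeasurableSpace Ω] (P : Measure Ω) [IsProbabilityMeasure P]
    (A₁ A₂ : Ω → ℝ) (hA₁m : Measurable A₁) (hA₂m : Measurable A₂)
    (hpos : P {ω | 0 < A₁ ω ∧ 0 < A₂ ω} = 1)
    (d₁ d₂ : ℝ) (hd₁ : 0 < d₁) (hd : d₁ ≤ d₂)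
    (M₁ M₂ : ℕ → ℝ)
    (hM₁ : ∀ n, M₁ n ∈ Set.Ioo (0 : ℝ) 1) (hM₂ : ∀ n, M₂ n ∈ Set.Ioo (0 : ℝ) 1)
    (hM₁lim : Tendsto M₁ atTop (nhds 1)) (hM₂lim : Tendsto M₂ atTop (nhds 1))
    (V : ℕ → Ω → ℝ)
    (hV : ∀ n ω, V n ω = v1debt d₁ d₂ (M₁ n) (M₂ n) (A₁ ω) (A₂ ω)) :
    Tendsto (fun n => P {ω | V n ω < d₁}) atTop (nhds 0) ∧
    ∀ (m : ℝ) (v : NNReal), 0 < v →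
      0 < ((ProbabilityTheory.gaussianReal m v).map Real.exp) (Set.Iio d₁) := by
  refine ⟨?_, fun m v hv => gaussianReal_map_exp_Iio_pos m hv.ne' hd₁⟩
  have h_ae : ∀ᵐ ω ∂P, 0 < A₁ ω ∧ 0 < A₂ ω := by
    have h_meas : MeasurableSet {ω | 0 < A₁ ω ∧ 0 < A₂ ω} :=
      (measurableSet_lt measurable_const hA₁m).inter (measurableSet_lt measurable_const hA₂m)
    rw [ae_iff_measure_eq h_meas.nullMeasurableSet, hpos, measure_univ]
  have h_prod_lt (n : ℕ) : M₁ n * M₂ n < 1 :=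
    mul_lt_one_of_nonneg_of_lt_one_left (hM₁ n).1.le (hM₁ n).2 (hM₂ n).2.le
  have h_threshold : Tendsto (fun n => d₁ * (1 - M₁ n * M₂ n)) atTop (𝓝[>] 0) := by
    refine tendsto_nhdsWithin_of_tendsto_nhds_of_eventually_within _ ?_
      (Eventually.of_forall fun n => mul_pos hd₁ (sub_pos.2 (h_prod_lt n)))
    simpa using (tendsto_const_nhds (x := d₁)).mul
      ((tendsto_const_nhds (x := (1 : ℝ))).sub (hM₁lim.mul hM₂lim))
  have h_nonpos : P {ω | A₁ ω ≤ 0} = 0 := by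
    simpa only [not_lt] using ae_iff.1 (h_ae.mono fun ω h => h.1)
  have h_default_le (n : ℕ) : P {ω | V n ω < d₁} ≤ P {ω | A₁ ω < d₁ * (1 - M₁ n * M₂ n)} := by
    refine measure_mono_ae (h_ae.mono fun ω hω h_default => ?_)
    by_contra h_safe
    refine (not_lt.2 ?_) h_default
    rw [hV]
    exact le_v1debt_of_mul_one_sub_le hd₁.le hd (hM₁ n).1.le (hM₂ n).2.le (h_prod_lt n) hω.2.le
      (not_lt.1 h_safe)
  refine tendsto_of_tendsto_of_tendsto_of_le_of_le tendsto_const_nhds ?_ (fun n => zero_le)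
    h_default_le
  simpa [Function.comp_def, h_nonpos] using
    (tendsto_measure_setOf_lt_nhdsGT P hA₁m 0).comp h_threshold

/-- under cross-ownership of debt only with `d₁ ≤ d₂` and exogenous asset
values that are almost surely strictly positive, the actual probability of default of
firm 1 tends to `0` as the fractions increase strictly to 1, while every lognormal
random variable `W` (whose law is the image of a Gaussian under `exp`) satisfies
`P(W < d₁) > 0`; hence the moment-matched lognormal model overestimates the limiting
probability of default. -/
theorem lognormal_overestimates_limiting_default_probability_debt_only
    (Ω : Type) [MeasurableSpace Ω] (P : Measure Ω) [IsProbabilityMeasure P]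
    (A₁ A₂ : Ω → ℝ) (hA₁m : Measurable A₁) (hA₂m : Measurable A₂)
    (hpos : P {ω | 0 < A₁ ω ∧ 0 < A₂ ω} = 1)
    (d₁ d₂ : ℝ) (hd₁ : 0 < d₁) (hd : d₁ ≤ d₂)
    (M₁ M₂ : ℕ → ℝ)
    (hM₁ : ∀ n, M₁ n ∈ Set.Ioo (0 : ℝ) 1) (hM₂ : ∀ n, M₂ n ∈ Set.Ioo (0 : ℝ) 1)
    (hM₁mono : StrictMono M₁) (hM₂mono : StrictMono M₂)
    (hM₁lim : Tendsto M₁ atTop (nhds 1)) (hM₂lim : Tendsto M₂ atTop (nhds 1))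
    (V : ℕ → Ω → ℝ)
    (hV : ∀ n ω, V n ω = v1debt d₁ d₂ (M₁ n) (M₂ n) (A₁ ω) (A₂ ω)) :
    Tendsto (fun n => P {ω | V n ω < d₁}) atTop (nhds 0) ∧
    ∀ (m : ℝ) (v : NNReal), 0 < v →
      0 < ((ProbabilityTheory.gaussianReal m v).map Real.exp) (Set.Iio d₁) :=
  lognormal_overestimates_limiting_default_probability_debt_only_general Ω P A₁ A₂ hA₁m hA₂m hpos d₁
    d₂ hd₁ hd M₁ M₂ hM₁ hM₂ hM₁lim hM₂lim V hV
end

section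
/- (Limiting default probabilities when d₁ > d₂.) Let A₁ = exp(X) with X ~ N(μ, σ²), σ > 0, let d₁ > d₂ > 0, and set V* := A₁ + d₂. With e := E(A₁) = exp(μ + σ²/2), w := Var(A₁) = exp(2μ + σ²)(exp(σ²) − 1), and the moment-matched parameters μ̃ := ½ ln((e + d₂)⁴/(w + (e + d₂)²)), σ̃ := √(ln(w/(e + d₂)² + 1)), the following hold: (i) P(V* < d₁) = Φ((ln(d₁ − d₂) − μ)/σ) > 0; (ii) μ̃ > μ and σ̃ < σ; (iii) Φ((ln d₁ − μ̃)/σ̃) > Φ((ln(d₁ − d₂) − μ)/σ) if and only if (d₁ − d₂)^σ̃ / d₁^σ < exp(σ̃μ − σμ̃). -/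
/-!
Since `V* = exp X + d₂` with `X` Gaussian, `{V* < d₁} = {X < ln(d₁ − d₂)}`, which gives (i).
For (ii), moment matching is exact on a lognormal law, so `(μ, σ)` are the matched parameters of
the mean `e` and variance `w`; with `w` fixed, the matched location increases and the matched
scale decreases in the mean, and `V*` has the larger mean `e + d₂`. Part (iii) is the strict
monotonicity of `Φ` followed by clearing denominators and taking logarithms.
-/

open MeasureTheory ProbabilityTheory

open Real Set

lemma gaussianReal_pos_of_volume_pos (μ : ℝ) {v : NNReal} (hv : v ≠ 0) {s : Set ℝ}
    (hs : 0 < volume s) : 0 < gaussianReal μ v s :=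
  pos_iff_ne_zero.2 fun h => hs.ne' (gaussianReal_absolutelyContinuous' μ hv h)

lemma stdNormalCdf_pos (x : ℝ) : 0 < stdNormalCdf x :=
  ENNReal.toReal_pos (gaussianReal_pos_of_volume_pos 0 one_ne_zero (by simp [volume_Iic])).ne'
    (measure_ne_top _ _)

lemma stdNormalCdf_strictMono : StrictMono stdNormalCdf := by
  intro a b hab
  have hsplit :
      gaussianReal 0 1 (Iic b) = gaussianReal 0 1 (Iic a) + gaussianReal 0 1 (Ioc a b) := by
    rw [← Iic_union_Ioc_eq_Iic hab.le,
      measure_union (Iic_disjoint_Ioc le_rfl) measurableSet_Ioc]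
  have hIoc : 0 < gaussianReal 0 1 (Ioc a b) :=
    gaussianReal_pos_of_volume_pos 0 one_ne_zero (by simpa using hab)
  refine ENNReal.toReal_strict_mono (measure_ne_top _ _) ?_
  rw [hsplit]
  exact ENNReal.lt_add_right (measure_ne_top _ _) hIoc.ne'

lemma gaussianReal_map_mul_add_of_std (μ σ : ℝ) :
    (gaussianReal 0 1).map (fun x => σ * x + μ) = gaussianReal μ ⟨σ ^ 2, sq_nonneg σ⟩ := by
  have hcomp : (gaussianReal 0 1).map (fun x => σ * x + μ) =
      ((gaussianReal 0 1).map (σ * ·)).map (· + μ) :=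
    (Measure.map_map (measurable_add_const μ) (measurable_const_mul σ)).symm
  rw [hcomp, gaussianReal_map_const_mul, gaussianReal_map_add_const, mul_zero, zero_add, mul_one]
  rfl

lemma gaussianReal_Iio_eq_ofReal_stdNormalCdf (μ : ℝ) {σ : ℝ} (hσ : 0 < σ) (b : ℝ) :
    gaussianReal μ ⟨σ ^ 2, sq_nonneg σ⟩ (Iio b) = ENNReal.ofReal (stdNormalCdf ((b - μ) / σ)) := by
  have hpre : (fun x => σ * x + μ) ⁻¹' Iio b = Iio ((b - μ) / σ) := by
    ext x
    simp only [mem_preimage, mem_Iio, lt_div_iff₀ hσ]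
    constructor <;> intro h <;> linarith
  have := nullSingletonClass_gaussianReal (μ := 0) one_ne_zero
  rw [← gaussianReal_map_mul_add_of_std, Measure.map_apply (by fun_prop) measurableSet_Iio, hpre,
    measure_congr Iio_ae_eq_Iic, stdNormalCdf, ENNReal.ofReal_toReal (measure_ne_top _ _)]

lemma gaussianReal_map_exp_add_const_Iio (μ : ℝ) {σ d q : ℝ} (hσ : 0 < σ) (hdq : d < q) :
    (gaussianReal μ ⟨σ ^ 2, sq_nonneg σ⟩).map (fun x => exp x + d) (Iio q) =
      ENNReal.ofReal (stdNormalCdf ((log (q - d) - μ) / σ)) := by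
  have hpre : (fun x => exp x + d) ⁻¹' Iio q = Iio (log (q - d)) := by
    ext x
    simp only [mem_preimage, mem_Iio, lt_log_iff_exp_lt (sub_pos.2 hdq), lt_sub_iff_add_lt]
  rw [Measure.map_apply (by fun_prop) measurableSet_Iio, hpre,
    gaussianReal_Iio_eq_ofReal_stdNormalCdf μ hσ]

/- Location and scale of the lognormal law with mean `m > 0` and variance `v`; the paper's
`(μ̃, σ̃)` are these at `m = e + d₂`, `v = w`. -/
noncomputable def lognormalLocOfMoments (m v : ℝ) : ℝ := 1 / 2 * log (m ^ 4 / (v + m ^ 2))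

noncomputable def lognormalScaleOfMoments (m v : ℝ) : ℝ := √(log (v / m ^ 2 + 1))

lemma lognormalLocOfMoments_eq {m v : ℝ} (hm : 0 < m) (hv : 0 ≤ v) :
    lognormalLocOfMoments m v = log m - log (v / m ^ 2 + 1) / 2 := by
  have hm2 : m ^ 2 ≠ 0 := by positivity
  have hfrac : m ^ 4 / (v + m ^ 2) = m ^ 2 / (v / m ^ 2 + 1) := by field_simp
  rw [lognormalLocOfMoments, hfrac, log_div hm2 (by positivity), log_pow]
  ring

lemma strictMonoOn_lognormalLocOfMoments {v : ℝ} (hv : 0 ≤ v) :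
    StrictMonoOn (lognormalLocOfMoments · v) (Ioi 0) := by
  intro a (ha : 0 < a) b (hb : 0 < b) hab
  have hlog : log a < log b := log_lt_log ha hab
  have hratio : log (v / b ^ 2 + 1) ≤ log (v / a ^ 2 + 1) := by gcongr
  simp only [lognormalLocOfMoments_eq ha hv, lognormalLocOfMoments_eq hb hv]
  linarith

lemma strictAntiOn_lognormalScaleOfMoments {v : ℝ} (hv : 0 < v) :
    StrictAntiOn (lognormalScaleOfMoments · v) (Ioi 0) := by
  intro a (ha : 0 < a) b (hb : 0 < b) hab
  have hratio : v / b ^ 2 < v / a ^ 2 := by gcongr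
  simp only [lognormalScaleOfMoments]
  gcongr
  exact log_nonneg (le_add_of_nonneg_left (by positivity))

lemma lognormalScaleOfMoments_pos {m v : ℝ} (hm : m ≠ 0) (hv : 0 < v) :
    0 < lognormalScaleOfMoments m v :=
  sqrt_pos.2 (log_pos (by simp only [lt_add_iff_pos_left]; positivity))

lemma lognormal_variance_div_mean_sq_add_one (μ σ : ℝ) :
    exp (2 * μ + σ ^ 2) * (exp (σ ^ 2) - 1) / exp (μ + σ ^ 2 / 2) ^ 2 + 1 = exp (σ ^ 2) := by
  rw [← exp_nat_mul, show (2 : ℕ) * (μ + σ ^ 2 / 2) = 2 * μ + σ ^ 2 by push_cast; ring,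
    mul_div_cancel_left₀ _ (exp_pos _).ne']
  ring

lemma lognormalLocOfMoments_lognormal (μ σ : ℝ) :
    lognormalLocOfMoments (exp (μ + σ ^ 2 / 2)) (exp (2 * μ + σ ^ 2) * (exp (σ ^ 2) - 1)) = μ := by
  rw [lognormalLocOfMoments_eq (exp_pos _)
      (mul_nonneg (exp_pos _).le (sub_nonneg.2 (one_le_exp (sq_nonneg σ)))),
    lognormal_variance_div_mean_sq_add_one, log_exp, log_exp]
  ring

lemma lognormalScaleOfMoments_lognormal (μ : ℝ) {σ : ℝ} (hσ : 0 ≤ σ) :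
    lognormalScaleOfMoments (exp (μ + σ ^ 2 / 2)) (exp (2 * μ + σ ^ 2) * (exp (σ ^ 2) - 1)) =
      σ := by
  rw [lognormalScaleOfMoments, lognormal_variance_div_mean_sq_add_one, log_exp, sqrt_sq hσ]

lemma log_sub_div_lt_log_sub_div_iff {a b s t : ℝ} (m n : ℝ) (ha : 0 < a) (hb : 0 < b)
    (hs : 0 < s) (ht : 0 < t) :
    (log a - m) / s < (log b - n) / t ↔ a ^ t / b ^ s < exp (t * m - s * n) := by
  rw [div_lt_div_iff₀ hs ht, ← log_lt_iff_lt_exp (by positivity),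
    log_div (by positivity) (by positivity), log_rpow ha, log_rpow hb]
  constructor <;> intro h <;> linarith

/-- limiting default probabilities when `d₁ > d₂` under cross-ownership of
debt only. With `A₁` lognormal with parameters `(μ, σ²)` and `V* = A₁ + d₂`, and
moment-matched lognormal parameters `(μ̃, σ̃²)`:
(i) `P(V* < d₁) = Φ((ln(d₁ − d₂) − μ)/σ) > 0`;
(ii) `μ̃ > μ` and `σ̃ < σ`;
(iii) `Φ((ln d₁ − μ̃)/σ̃) > Φ((ln(d₁ − d₂) − μ)/σ)` iff
`(d₁ − d₂)^σ̃ / d₁^σ < exp(σ̃μ − σμ̃)`. -/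
theorem limiting_default_probabilities_debt_only_d1_gt_d2
    (μ σ d₁ d₂ e w μt σt : ℝ) (hσ : 0 < σ) (hd₂ : 0 < d₂) (hd : d₂ < d₁)
    (he : e = Real.exp (μ + σ ^ 2 / 2))
    (hw : w = Real.exp (2 * μ + σ ^ 2) * (Real.exp (σ ^ 2) - 1))
    (hμt : μt = (1 / 2) * Real.log ((e + d₂) ^ 4 / (w + (e + d₂) ^ 2)))
    (hσt : σt = Real.sqrt (Real.log (w / (e + d₂) ^ 2 + 1))) :
    (((ProbabilityTheory.gaussianReal μ ⟨σ ^ 2, sq_nonneg σ⟩).map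
        (fun x => Real.exp x + d₂)) (Set.Iio d₁) =
      ENNReal.ofReal (stdNormalCdf ((Real.log (d₁ - d₂) - μ) / σ)) ∧
      0 < stdNormalCdf ((Real.log (d₁ - d₂) - μ) / σ)) ∧
    (μ < μt ∧ σt < σ) ∧
    (stdNormalCdf ((Real.log (d₁ - d₂) - μ) / σ) <
        stdNormalCdf ((Real.log d₁ - μt) / σt) ↔
      (d₁ - d₂) ^ σt / d₁ ^ σ < Real.exp (σt * μ - σ * μt)) := by
  have he_pos : 0 < e := he ▸ exp_pos _
  have hw_pos : 0 < w := hw ▸ mul_pos (exp_pos _) (sub_pos.2 (one_lt_exp_iff.2 (by positivity)))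
  have hmean : e < e + d₂ := lt_add_of_pos_right e hd₂
  have hμt_eq : μt = lognormalLocOfMoments (e + d₂) w := hμt
  have hσt_eq : σt = lognormalScaleOfMoments (e + d₂) w := hσt
  have hμ_eq : μ = lognormalLocOfMoments e w := by rw [he, hw, lognormalLocOfMoments_lognormal]
  have hσ_eq : σ = lognormalScaleOfMoments e w := by
    rw [he, hw, lognormalScaleOfMoments_lognormal μ hσ.le]
  have hσt_pos : 0 < σt := hσt_eq ▸ lognormalScaleOfMoments_pos (by positivity) hw_pos
  refine ⟨⟨gaussianReal_map_exp_add_const_Iio μ hσ hd, stdNormalCdf_pos _⟩, ⟨?_, ?_⟩, ?_⟩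
  · rw [hμ_eq, hμt_eq]
    exact strictMonoOn_lognormalLocOfMoments hw_pos.le he_pos (add_pos he_pos hd₂) hmean
  · rw [hσ_eq, hσt_eq]
    exact strictAntiOn_lognormalScaleOfMoments hw_pos he_pos (add_pos he_pos hd₂) hmean
  · rw [stdNormalCdf_strictMono.lt_iff_lt]
    exact log_sub_div_lt_log_sub_div_iff μ μt (by linarith) (by linarith) hσ hσt_pos
end

section
/- (Lemma A5.) Let μ, μ̃ ∈ ℝ and σ, σ̃, d₂ > 0 with σ > σ̃, and suppose exp(μ̃ + σ̃²/2) = exp(μ + σ²/2) + d₂ and (exp(σ̃²) − 1)·exp(2μ̃ + σ̃²) = (exp(σ²) − 1)·exp(2μ + σ²). Then exp(σ̃μ − σμ̃) < (σ̃d₂/(σ − σ̃))^σ̃ / (σd₂/(σ − σ̃))^σ. -/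
/-!
Put `u = exp (μ + σ² / 2)`, so that the mean condition reads `exp (μ̃ + σ̃² / 2) = u + d₂` and
`exp (σ̃ (μ + σ² / 2) - σ (μ̃ + σ̃² / 2)) = u ^ σ̃ / (u + d₂) ^ σ`. The right-hand side of the claim is
the maximum of `u ↦ u ^ σ̃ / (u + d₂) ^ σ` on `u > 0`, attained at `u = σ̃ d₂ / (σ - σ̃)`, as weighted
AM-GM shows. The claim is strict because `σ̃ σ² / 2 - σ σ̃² / 2 > 0`.
-/

open Real

theorem rpow_div_add_rpow_le {u d t s : ℝ} (hu : 0 < u) (hd : 0 < d) (ht : 0 < t)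
    (hts : t < s) :
    u ^ t / (u + d) ^ s ≤ (t * d / (s - t)) ^ t / (s * d / (s - t)) ^ s := by
  have hs : 0 < s := ht.trans hts
  have hc : 0 < s - t := sub_pos.2 hts
  set D := s * d / (s - t) with hD
  have hD0 : 0 < D := by positivity
  have amgm : (s * u / t) ^ (t / s) * D ^ ((s - t) / s) ≤ u + d := by
    have := geom_mean_le_arith_mean2_weighted (w₁ := t / s) (w₂ := (s - t) / s)
      (p₁ := s * u / t) (p₂ := D) (by positivity) (by positivity) (by positivity) hD0.le
      (by field_simp; ring)
    convert this using 1
    rw [hD]; field_simp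
  have amgm_pow : (s * u / t) ^ t * D ^ (s - t) ≤ (u + d) ^ s := by
    have := rpow_le_rpow (by positivity) amgm hs.le
    rwa [mul_rpow (by positivity) (by positivity), ← rpow_mul (by positivity),
      ← rpow_mul hD0.le, div_mul_cancel₀ _ hs.ne', div_mul_cancel₀ _ hs.ne'] at this
  rw [div_le_div_iff₀ (by positivity) (by positivity)]
  calc u ^ t * D ^ s = (t * d / (s - t)) ^ t * ((s * u / t) ^ t * D ^ (s - t)) := by
        have hprod : t * d / (s - t) * (s * u / t) = u * D := by rw [hD]; field_simp
        rw [← mul_assoc, ← mul_rpow (by positivity) (by positivity), hprod,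
          mul_rpow hu.le hD0.le, mul_assoc, ← rpow_add hD0, add_sub_cancel]
    _ ≤ (t * d / (s - t)) ^ t * (u + d) ^ s := by gcongr

theorem lemma_A5_general
    (μ μt σ σt d₂ : ℝ) (hσt : 0 < σt) (hσ : σt < σ) (hd₂ : 0 < d₂)
    (h1 : Real.exp (μt + σt ^ 2 / 2) = Real.exp (μ + σ ^ 2 / 2) + d₂) :
    Real.exp (σt * μ - σ * μt) <
      (σt * d₂ / (σ - σt)) ^ σt / (σ * d₂ / (σ - σt)) ^ σ := by
  calc exp (σt * μ - σ * μt)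
      < exp ((μ + σ ^ 2 / 2) * σt - (μt + σt ^ 2 / 2) * σ) := by
        rw [exp_lt_exp]
        nlinarith [mul_pos (mul_pos hσt (hσt.trans hσ)) (sub_pos.2 hσ)]
    _ = exp (μ + σ ^ 2 / 2) ^ σt / (exp (μ + σ ^ 2 / 2) + d₂) ^ σ := by
        rw [← h1, ← exp_mul, ← exp_mul, exp_sub]
    _ ≤ _ := rpow_div_add_rpow_le (exp_pos _) hd₂ hσt hσ

/-- Lemma A5: if a lognormal distribution with parameters `(μ̃, σ̃²)` has
the same mean and variance as `d₂` plus a lognormal distribution with parameters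
`(μ, σ²)`, where `σ > σ̃ > 0` and `d₂ > 0`, then
`exp(σ̃μ − σμ̃) < (σ̃d₂/(σ − σ̃))^σ̃ / (σd₂/(σ − σ̃))^σ`. -/
theorem lemma_A5
    (μ μt σ σt d₂ : ℝ) (hσt : 0 < σt) (hσ : σt < σ) (hd₂ : 0 < d₂)
    (h1 : Real.exp (μt + σt ^ 2 / 2) = Real.exp (μ + σ ^ 2 / 2) + d₂)
    (h2 : (Real.exp (σt ^ 2) - 1) * Real.exp (2 * μt + σt ^ 2) =
      (Real.exp (σ ^ 2) - 1) * Real.exp (2 * μ + σ ^ 2)) :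
    Real.exp (σt * μ - σ * μt) <
      (σt * d₂ / (σ - σt)) ^ σt / (σ * d₂ / (σ - σt)) ^ σ :=
  lemma_A5_general μ μt σ σt d₂ hσt hσ hd₂ h1
end

section
/- Let d₁ > 0 and let x₁ < 0, x₂ ≥ d₁, y₁ < 0, y₂ ≥ d₁² be real numbers such that for all p ∈ [0,1]: p·x₁ + x₂ > 0 and p·y₁ + y₂ > (p·x₁ + x₂)². Define h : [0,1] → (0,1) by h(p) = Φ((ln d₁ − ½ ln((p·x₁ + x₂)⁴/(p·y₁ + y₂))) / √(ln((p·y₁ + y₂)/(p·x₁ + x₂)²))). Then h is continuous with h(0) > 0 and h(1) < 1; consequently there exists ε ∈ (0,1] such that h(p) > p for all p ∈ [0, ε), and there exists ε′ ∈ [0,1) such that h(p) < p for all p ∈ (ε′, 1]. (Thus the approximating lognormal model overestimates every sufficiently small actual default probability p and underestimates every actual default probability p sufficiently close to 1.) -/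
/-!
Positive variance keeps every logarithm and square root in `h` away from its singular set, so
`h` is `Φ` composed with a function continuous on `[0, 1]`. A Gaussian law charges both half-lines
at every point, so `Φ` takes values in `(0, 1)`; in particular `h 0 > 0` and `h 1 < 1`, and
continuity of `p ↦ h p - p` propagates these strict inequalities to one-sided neighbourhoods of
the endpoints.
-/

open MeasureTheory ProbabilityTheory Set Real

lemma continuous_stdNormalCdf : Continuous stdNormalCdf := by
  have hcdf : stdNormalCdf = fun x ↦ ∫ t in Iic x, gaussianPDFReal 0 1 t := funext fun x ↦ by
    rw [stdNormalCdf, gaussianReal_apply_eq_integral 0 one_ne_zero, ENNReal.toReal_ofReal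
      (setIntegral_nonneg measurableSet_Iic fun t _ ↦ gaussianPDFReal_nonneg 0 1 t)]
  rw [hcdf, continuous_iff_continuousAt]
  exact fun x ↦ ((integrable_gaussianPDFReal 0 1).integrableOn.continuousOn_Iic_primitive_Iic
    (a₀ := x + 1)).continuousAt (Iic_mem_nhds (lt_add_one x))

lemma gaussianReal_real_pos (μ : ℝ) {v : NNReal} (hv : v ≠ 0) {s : Set ℝ} (hs : volume s ≠ 0) :
    0 < (gaussianReal μ v).real s :=
  ENNReal.toReal_pos (mt (gaussianReal_absolutelyContinuous' μ hv ·) hs) (measure_ne_top _ _)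

lemma stdNormalCdf_mem_Ioo (x : ℝ) : stdNormalCdf x ∈ Ioo 0 1 := by
  have hIic := gaussianReal_real_pos 0 one_ne_zero (s := Iic x) (by simp)
  have hIoi := gaussianReal_real_pos 0 one_ne_zero (s := Ioi x) (by simp)
  rw [← compl_Iic, probReal_compl_eq_one_sub measurableSet_Iic] at hIoi
  exact ⟨hIic, sub_pos.mp hIoi⟩

/-- `(log d - μ) / σ` for the lognormal law with mean `m` and second moment `q`, whose
log-location and log-scale are `μ = ½ log (m⁴ / q)` and `σ² = log (q / m²)`. -/
lemma continuousOn_lognormal_threshold {s : Set ℝ} {m q : ℝ → ℝ} (d : ℝ)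
    (hm : ContinuousOn m s) (hq : ContinuousOn q s) (hm_pos : ∀ p ∈ s, 0 < m p)
    (hvar : ∀ p ∈ s, m p ^ 2 < q p) :
    ContinuousOn (fun p ↦ (log d - 1 / 2 * log (m p ^ 4 / q p)) / √(log (q p / m p ^ 2))) s := by
  have hm2 : ∀ p ∈ s, 0 < m p ^ 2 := fun p hp ↦ pow_pos (hm_pos p hp) 2
  have hq_pos : ∀ p ∈ s, 0 < q p := fun p hp ↦ (hm2 p hp).trans (hvar p hp)
  refine ContinuousOn.div (continuousOn_const.sub (continuousOn_const.mul ?_))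
    (((hq.div (hm.pow 2) fun p hp ↦ (hm2 p hp).ne').log fun p hp ↦
      (div_pos (hq_pos p hp) (hm2 p hp)).ne').sqrt) fun p hp ↦ ?_
  · exact ((hm.pow 4).div hq fun p hp ↦ (hq_pos p hp).ne').log fun p hp ↦
      (div_pos (pow_pos (hm_pos p hp) 4) (hq_pos p hp)).ne'
  · exact (sqrt_pos.2 (log_pos ((one_lt_div (hm2 p hp)).2 (hvar p hp)))).ne'

section
variable {α : Type*} [LinearOrder α] [TopologicalSpace α] [OrderTopology α] {f : α → α} {a b : α}

lemma exists_Ico_forall_lt_of_continuousWithinAt (hab : a < b)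
    (hf : ContinuousWithinAt f (Icc a b) a) (ha : a < f a) :
    ∃ c ∈ Ioc a b, ∀ p ∈ Ico a c, p < f p :=
  ((TFAE_mem_nhdsGE hab {p | p < f p}).out 1 3).mp (continuousWithinAt_id.eventually_lt hf ha)

lemma exists_Ioc_forall_lt_of_continuousWithinAt (hab : a < b)
    (hf : ContinuousWithinAt f (Icc a b) b) (hb : f b < b) :
    ∃ c ∈ Ico a b, ∀ p ∈ Ioc c b, f p < p :=
  ((TFAE_mem_nhdsLE hab {p | f p < p}).out 1 3).mp (hf.eventually_lt continuousWithinAt_id hb)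

end

theorem lognormal_default_probability_near_p0_and_p1_general
    (d₁ x₁ x₂ y₁ y₂ : ℝ)
    (hvar : ∀ p ∈ Set.Icc (0 : ℝ) 1,
      0 < p * x₁ + x₂ ∧ (p * x₁ + x₂) ^ 2 < p * y₁ + y₂)
    (h : ℝ → ℝ)
    (hh : ∀ p, h p = stdNormalCdf
      ((Real.log d₁ - (1 / 2) * Real.log ((p * x₁ + x₂) ^ 4 / (p * y₁ + y₂))) /
        Real.sqrt (Real.log ((p * y₁ + y₂) / (p * x₁ + x₂) ^ 2)))) :
    ContinuousOn h (Set.Icc 0 1) ∧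
    (∀ p ∈ Set.Icc (0 : ℝ) 1, h p ∈ Set.Ioo (0 : ℝ) 1) ∧
    0 < h 0 ∧ h 1 < 1 ∧
    (∃ ε ∈ Set.Ioc (0 : ℝ) 1, ∀ p ∈ Set.Ico (0 : ℝ) ε, p < h p) ∧
    (∃ ε' ∈ Set.Ico (0 : ℝ) 1, ∀ p ∈ Set.Ioc ε' (1 : ℝ), h p < p) := by
  have hcont : ContinuousOn h (Icc 0 1) := by
    rw [funext hh]
    exact continuous_stdNormalCdf.comp_continuousOn <| continuousOn_lognormal_threshold d₁
      (by fun_prop) (by fun_prop) (fun p hp ↦ (hvar p hp).1) (fun p hp ↦ (hvar p hp).2)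
  have hmem (p : ℝ) : h p ∈ Ioo 0 1 := hh p ▸ stdNormalCdf_mem_Ioo _
  refine ⟨hcont, fun p _ ↦ hmem p, (hmem 0).1, (hmem 1).2, ?_, ?_⟩
  · exact exists_Ico_forall_lt_of_continuousWithinAt zero_lt_one
      (hcont 0 (left_mem_Icc.2 zero_le_one)) (hmem 0).1
  · exact exists_Ioc_forall_lt_of_continuousWithinAt zero_lt_one
      (hcont 1 (right_mem_Icc.2 zero_le_one)) (hmem 1).2

/-- with fixed conditional moments `x₁ < 0`, `x₂ ≥ d₁`, `y₁ < 0`,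
`y₂ ≥ d₁²` (so that `E_p(V₁) = p x₁ + x₂` and `E_p(V₁²) = p y₁ + y₂`, with
`Var_p(V₁) > 0` for all `p ∈ [0,1]`), the default probability
`h(p) = Φ((ln d₁ − ½ ln((p x₁ + x₂)⁴/(p y₁ + y₂)))/√(ln((p y₁ + y₂)/(p x₁ + x₂)²)))`
of the moment-matched lognormal model is a continuous map of `[0,1]` into `(0,1)` with
`h(0) > 0` and `h(1) < 1`; consequently `h(p) > p` for all sufficiently small `p` and
`h(p) < p` for all `p` sufficiently close to `1`. -/
theorem lognormal_default_probability_near_p0_and_p1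
    (d₁ x₁ x₂ y₁ y₂ : ℝ) (hd₁ : 0 < d₁)
    (hx₁ : x₁ < 0) (hx₂ : d₁ ≤ x₂) (hy₁ : y₁ < 0) (hy₂ : d₁ ^ 2 ≤ y₂)
    (hvar : ∀ p ∈ Set.Icc (0 : ℝ) 1,
      0 < p * x₁ + x₂ ∧ (p * x₁ + x₂) ^ 2 < p * y₁ + y₂)
    (h : ℝ → ℝ)
    (hh : ∀ p, h p = stdNormalCdf
      ((Real.log d₁ - (1 / 2) * Real.log ((p * x₁ + x₂) ^ 4 / (p * y₁ + y₂))) /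
        Real.sqrt (Real.log ((p * y₁ + y₂) / (p * x₁ + x₂) ^ 2)))) :
    ContinuousOn h (Set.Icc 0 1) ∧
    (∀ p ∈ Set.Icc (0 : ℝ) 1, h p ∈ Set.Ioo (0 : ℝ) 1) ∧
    0 < h 0 ∧ h 1 < 1 ∧
    (∃ ε ∈ Set.Ioc (0 : ℝ) 1, ∀ p ∈ Set.Ico (0 : ℝ) ε, p < h p) ∧
    (∃ ε' ∈ Set.Ico (0 : ℝ) 1, ∀ p ∈ Set.Ioc ε' (1 : ℝ), h p < p) :=
  lognormal_default_probability_near_p0_and_p1_general d₁ x₁ x₂ y₁ y₂ hvar h hh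
end

section
/- Let p ∈ (0,1) and d₁ > 0. For E > d₁ let V_E be a random variable with P(V_E = d₁/2) = p and P(V_E = (E − p·d₁/2)/(1 − p)) = 1 − p. Then (E − p·d₁/2)/(1 − p) > d₁, E(V_E) = E, P(V_E < d₁) = p and Var(V_E) > 0; moreover there exists E₀ > d₁ such that for all E ≥ E₀ one has E⁴(1 − p) + d₁³·p·E − E²·d₁² − d₁⁴·p/4 ≥ 0, which is equivalent to E(V_E)⁴ ≥ d₁²·E(V_E²). For such E, the lognormal random variable W with the same mean and variance as V_E, i.e. with parameters μ̃ = ½ ln(E(V_E)⁴/E(V_E²)) and σ̃ = √(ln(E(V_E²)/E(V_E)²)), satisfies P(W < d₁) = Φ((ln d₁ − μ̃)/σ̃) ≤ 1/2, while the actual default probability P(V_E < d₁) = p can be any value in (0,1); in particular for p > 1/2 the moment-matched lognormal model underestimates the actual default probability. -/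
/-!
For `E > d₁` the two-point law of `V_E` is explicit: its mean is `E`, its second moment is
`p (d₁/2)² + (1 - p) b²` with `b = (E - p d₁/2)/(1 - p)`, and its variance `p (1 - p) (b - d₁/2)²`
is positive. The quartic equals `(1 - p) (E⁴ - d₁² E(V_E²))`, and it is nonnegative once
`E ≥ d₁/(1 - p)`. The condition `d₁² E(V²) ≤ E(V)⁴` says that `d₁` lies below the median
`exp μ̃` of the moment-matched lognormal law, which therefore puts mass at most `1/2` below `d₁`,
whatever `p` is.
-/

open MeasureTheory ProbabilityTheory

open Real

lemma gaussianReal_zero_one_singleton (x : ℝ) : gaussianReal 0 1 {x} = 0 :=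
  gaussianReal_absolutelyContinuous 0 one_ne_zero (measure_singleton x)

lemma stdNormalCdf_zero : stdNormalCdf 0 = 1 / 2 := by
  have hsymm : gaussianReal 0 1 (Set.Iic 0) = gaussianReal 0 1 (Set.Ici 0) := by
    have hneg := gaussianReal_map_neg (μ := 0) (v := 1)
    rw [neg_zero] at hneg
    conv_rhs => rw [← hneg, Measure.map_apply (by fun_prop) measurableSet_Ici]
    congr 1
    ext x
    simp
  have hsum : gaussianReal 0 1 (Set.Iic 0) + gaussianReal 0 1 (Set.Ici 0) = 1 := by
    rw [← measure_union_add_inter (Set.Iic 0) measurableSet_Ici, Set.Iic_union_Ici,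
      Set.Iic_inter_Ici, Set.Icc_self, gaussianReal_zero_one_singleton, measure_univ, add_zero]
  rw [← hsymm, ← two_mul] at hsum
  have := congrArg ENNReal.toReal hsum
  rw [ENNReal.toReal_mul] at this
  simp only [ENNReal.toReal_ofNat, ENNReal.toReal_one] at this
  rw [stdNormalCdf]
  linarith

lemma stdNormalCdf_mono : Monotone stdNormalCdf := fun _ _ h =>
  ENNReal.toReal_mono (measure_ne_top _ _) (measure_mono (Set.Iic_subset_Iic.2 h))

lemma stdNormalCdf_le_half {x : ℝ} (hx : x ≤ 0) : stdNormalCdf x ≤ 1 / 2 :=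
  stdNormalCdf_zero ▸ stdNormalCdf_mono hx

lemma gaussianReal_Iio {μ σ : ℝ} (hσ : 0 < σ) (x : ℝ) :
    gaussianReal μ ⟨σ ^ 2, sq_nonneg σ⟩ (Set.Iio x)
      = ENNReal.ofReal (stdNormalCdf ((x - μ) / σ)) := by
  have hstd : gaussianReal μ ⟨σ ^ 2, sq_nonneg σ⟩
      = ((gaussianReal 0 1).map (σ * ·)).map (· + μ) := by
    rw [gaussianReal_map_const_mul, gaussianReal_map_add_const, mul_zero, zero_add, mul_one]
    rfl
  have hpre : (σ * ·) ⁻¹' ((· + μ) ⁻¹' Set.Iio x) = Set.Iio ((x - μ) / σ) := by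
    ext y
    simp only [Set.mem_preimage, Set.mem_Iio, lt_div_iff₀ hσ]
    constructor <;> intro h <;> linarith
  rw [hstd, Measure.map_apply (by fun_prop) measurableSet_Iio,
    Measure.map_apply (by fun_prop) (measurableSet_Iio.preimage (by fun_prop)), hpre,
    measure_congr (Iio_ae_eq_Iic' (gaussianReal_zero_one_singleton _)), stdNormalCdf,
    ENNReal.ofReal_toReal (measure_ne_top _ _)]

lemma lognormal_Iio {μ σ x : ℝ} (hσ : 0 < σ) (hx : 0 < x) :
    (gaussianReal μ ⟨σ ^ 2, sq_nonneg σ⟩).map exp (Set.Iio x)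
      = ENNReal.ofReal (stdNormalCdf ((log x - μ) / σ)) := by
  have hpre : exp ⁻¹' Set.Iio x = Set.Iio (log x) := by
    ext y
    simp [lt_log_iff_exp_lt hx]
  rw [Measure.map_apply measurable_exp measurableSet_Iio, hpre, gaussianReal_Iio hσ]

lemma momentMatched_lognormal_Iio {m M d μ σ : ℝ} (hm : 0 < m) (hmM : m ^ 2 < M) (hd : 0 < d)
    (hdM : d ^ 2 * M ≤ m ^ 4) (hμ : μ = 1 / 2 * log (m ^ 4 / M))
    (hσ : σ = √(log (M / m ^ 2))) :
    (gaussianReal μ ⟨σ ^ 2, sq_nonneg σ⟩).map exp (Set.Iio d)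
        = ENNReal.ofReal (stdNormalCdf ((log d - μ) / σ)) ∧
      stdNormalCdf ((log d - μ) / σ) ≤ 1 / 2 := by
  have hM : 0 < M := (pow_pos hm 2).trans hmM
  have hσpos : 0 < σ := hσ ▸ sqrt_pos.2 (log_pos ((one_lt_div (pow_pos hm 2)).2 hmM))
  have hlog : log d ≤ μ := by
    have := log_le_log (pow_pos hd 2) ((le_div_iff₀ hM).2 hdM)
    rw [log_pow] at this
    rw [hμ]
    push_cast at this
    linarith
  exact ⟨lognormal_Iio hσpos hd,
    stdNormalCdf_le_half (div_nonpos_of_nonpos_of_nonneg (sub_nonpos.2 hlog) hσpos.le)⟩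

structure IsTwoPoint {Ω : Type*} [MeasurableSpace Ω] (P : Measure Ω) (X : Ω → ℝ) (a b p : ℝ) :
    Prop where
  measurable : Measurable X
  measure_eq_fst : P {ω | X ω = a} = ENNReal.ofReal p
  measure_eq_snd : P {ω | X ω = b} = ENNReal.ofReal (1 - p)

namespace IsTwoPoint

variable {Ω : Type*} [MeasurableSpace Ω] {P : Measure Ω} [IsProbabilityMeasure P]
  {X : Ω → ℝ} {a b p : ℝ}

lemma ae_eq_or_eq (h : IsTwoPoint P X a b p) (hab : a ≠ b) : ∀ᵐ ω ∂P, X ω = a ∨ X ω = b := by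
  have hA := h.measurable (measurableSet_singleton a)
  have hB := h.measurable (measurableSet_singleton b)
  have hdisj : Disjoint {ω | X ω = a} {ω | X ω = b} :=
    Set.disjoint_left.2 fun _ ha hb => hab (ha.symm.trans hb)
  refine (ae_iff_measure_eq (hA.union hB).nullMeasurableSet).2 ?_
  refine le_antisymm (measure_mono (Set.subset_univ _)) ?_
  calc P Set.univ = ENNReal.ofReal (p + (1 - p)) := by simp
    _ ≤ ENNReal.ofReal p + ENNReal.ofReal (1 - p) := ENNReal.ofReal_add_le
    _ = P {ω | X ω = a ∨ X ω = b} := by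
      rw [Set.ofPred_or, measure_union hdisj hB, h.measure_eq_fst, h.measure_eq_snd]

lemma integral_comp (h : IsTwoPoint P X a b p) (hab : a ≠ b) (hp0 : 0 ≤ p) (hp1 : p ≤ 1)
    (g : ℝ → ℝ) : ∫ ω, g (X ω) ∂P = p * g a + (1 - p) * g b := by
  have hA : MeasurableSet {ω | X ω = a} := h.measurable (measurableSet_singleton a)
  have hB : MeasurableSet {ω | X ω = b} := h.measurable (measurableSet_singleton b)
  have heq : (fun ω => g (X ω)) =ᵐ[P]
      fun ω => {ω | X ω = a}.indicator (fun _ => g a) ω + {ω | X ω = b}.indicator (fun _ => g b) ω := by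
    filter_upwards [h.ae_eq_or_eq hab] with ω hω
    rcases hω with hω | hω <;> simp [Set.indicator, hω, hab, hab.symm]
  rw [integral_congr_ae heq, integral_add ((integrable_const _).indicator hA)
      ((integrable_const _).indicator hB), integral_indicator_const _ hA,
    integral_indicator_const _ hB, measureReal_def, measureReal_def, h.measure_eq_fst,
    h.measure_eq_snd, ENNReal.toReal_ofReal hp0, ENNReal.toReal_ofReal (sub_nonneg.2 hp1),
    smul_eq_mul, smul_eq_mul]

lemma memLp_two (h : IsTwoPoint P X a b p) (hab : a ≠ b) : MemLp X 2 P := by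
  refine MemLp.of_bound h.measurable.aestronglyMeasurable (max |a| |b|) ?_
  filter_upwards [h.ae_eq_or_eq hab] with ω hω
  rcases hω with hω | hω <;> simp [hω]

lemma variance_eq (h : IsTwoPoint P X a b p) (hab : a ≠ b) (hp0 : 0 ≤ p) (hp1 : p ≤ 1) :
    variance X P = p * (1 - p) * (b - a) ^ 2 := by
  rw [variance_eq_sub (h.memLp_two hab)]
  have hmean := h.integral_comp hab hp0 hp1 id
  have hsq := h.integral_comp hab hp0 hp1 (· ^ 2)
  simp only [id, Pi.pow_apply] at hmean hsq ⊢
  rw [hmean, hsq]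
  ring

lemma variance_pos (h : IsTwoPoint P X a b p) (hab : a ≠ b) (hp0 : 0 < p) (hp1 : p < 1) :
    0 < variance X P := by
  rw [h.variance_eq hab hp0.le hp1.le]
  have : 0 < 1 - p := sub_pos.2 hp1
  have : b - a ≠ 0 := sub_ne_zero.2 hab.symm
  positivity

lemma sq_integral_lt_integral_sq (h : IsTwoPoint P X a b p) (hab : a ≠ b) (hp0 : 0 < p)
    (hp1 : p < 1) : (∫ ω, X ω ∂P) ^ 2 < ∫ ω, X ω ^ 2 ∂P := by
  have := h.variance_pos hab hp0 hp1
  rw [variance_eq_sub (h.memLp_two hab)] at this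
  simpa using this

lemma measure_lt (h : IsTwoPoint P X a b p) {c : ℝ} (hac : a < c) (hcb : c ≤ b) :
    P {ω | X ω < c} = ENNReal.ofReal p := by
  rw [← h.measure_eq_fst]
  refine measure_congr ?_
  filter_upwards [h.ae_eq_or_eq (hac.trans_le hcb).ne] with ω hω
  refine propext (show X ω < c ↔ X ω = a from ?_)
  rcases hω with hω | hω <;> simp [hω, hac, hcb.not_gt, (hac.trans_le hcb).ne']

end IsTwoPoint

/-- The upper value of `V_E`, chosen so that the mean of `V_E` is `E`. -/
noncomputable def upperValue (p d E : ℝ) : ℝ := (E - p * d / 2) / (1 - p)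

section UpperValue

variable {p d E : ℝ}

lemma lt_upperValue (hp0 : 0 ≤ p) (hp1 : p < 1) (hd : 0 ≤ d) (hE : d < E) :
    d < upperValue p d E := by
  rw [upperValue, lt_div_iff₀ (sub_pos.2 hp1)]
  nlinarith

lemma mean_upperValue (hp1 : p < 1) : p * (d / 2) + (1 - p) * upperValue p d E = E := by
  rw [upperValue, mul_div_cancel₀ _ (sub_pos.2 hp1).ne']
  ring

lemma quartic_eq (hp1 : p < 1) :
    E ^ 4 * (1 - p) + d ^ 3 * p * E - E ^ 2 * d ^ 2 - d ^ 4 * p / 4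
      = (1 - p) * (E ^ 4 - d ^ 2 * (p * (d / 2) ^ 2 + (1 - p) * upperValue p d E ^ 2)) := by
  rw [upperValue]
  field_simp [(sub_pos.2 hp1).ne']
  ring

lemma quartic_nonneg (hp0 : 0 ≤ p) (hp1 : p < 1) (hd : 0 ≤ d) (hE : d / (1 - p) ≤ E) :
    0 ≤ E ^ 4 * (1 - p) + d ^ 3 * p * E - E ^ 2 * d ^ 2 - d ^ 4 * p / 4 := by
  have hq : 0 < 1 - p := sub_pos.2 hp1
  have hdE : d ≤ E * (1 - p) := (div_le_iff₀ hq).1 hE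
  have hsq : d ^ 2 ≤ E ^ 2 * (1 - p) := by nlinarith
  have hdE' : d / 4 ≤ E := by nlinarith
  calc 0 ≤ E ^ 2 * (E ^ 2 * (1 - p) - d ^ 2) + p * d ^ 3 * (E - d / 4) :=
        add_nonneg (mul_nonneg (sq_nonneg E) (sub_nonneg.2 hsq))
          (mul_nonneg (mul_nonneg hp0 (pow_nonneg hd 3)) (sub_nonneg.2 hdE'))
    _ = _ := by ring

end UpperValue

/-- for `p ∈ (0,1)`, `d₁ > 0` and `E > d₁`, a two-point firm value `V_E`
with `P(V_E = d₁/2) = p` and `P(V_E = (E − p d₁/2)/(1 − p)) = 1 − p` satisfies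
`(E − p d₁/2)/(1 − p) > d₁`, has mean `E`, default probability `P(V_E < d₁) = p` and
positive variance; for all sufficiently large `E` the stated quartic inequality holds,
which is equivalent to `E(V_E)⁴ ≥ d₁² E(V_E²)`; and for such `E` the moment-matched
lognormal distribution assigns default probability `Φ((ln d₁ − μ̃)/σ̃) ≤ 1/2`, which for
`p > 1/2` underestimates the actual default probability `p`. -/
theorem two_point_firm_value_lognormal_underestimation
    (Ω : Type) [MeasurableSpace Ω] (P : Measure Ω) [IsProbabilityMeasure P]
    (p d₁ : ℝ) (hp : p ∈ Set.Ioo (0 : ℝ) 1) (hd₁ : 0 < d₁)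
    (V : ℝ → Ω → ℝ) (hVmeas : ∀ E, Measurable (V E))
    (hV1 : ∀ E : ℝ, d₁ < E → P {ω | V E ω = d₁ / 2} = ENNReal.ofReal p)
    (hV2 : ∀ E : ℝ, d₁ < E →
      P {ω | V E ω = (E - p * d₁ / 2) / (1 - p)} = ENNReal.ofReal (1 - p)) :
    (∀ E : ℝ, d₁ < E →
      d₁ < (E - p * d₁ / 2) / (1 - p) ∧
      (∫ ω, V E ω ∂P) = E ∧
      P {ω | V E ω < d₁} = ENNReal.ofReal p ∧
      0 < variance (V E) P) ∧
    (∃ E₀ : ℝ, d₁ < E₀ ∧ ∀ E : ℝ, E₀ ≤ E →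
      0 ≤ E ^ 4 * (1 - p) + d₁ ^ 3 * p * E - E ^ 2 * d₁ ^ 2 - d₁ ^ 4 * p / 4) ∧
    (∀ E : ℝ, d₁ < E →
      (0 ≤ E ^ 4 * (1 - p) + d₁ ^ 3 * p * E - E ^ 2 * d₁ ^ 2 - d₁ ^ 4 * p / 4 ↔
        d₁ ^ 2 * (∫ ω, (V E ω) ^ 2 ∂P) ≤ (∫ ω, V E ω ∂P) ^ 4)) ∧
    (∀ E : ℝ, d₁ < E →
      d₁ ^ 2 * (∫ ω, (V E ω) ^ 2 ∂P) ≤ (∫ ω, V E ω ∂P) ^ 4 →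
      ∀ μt σt : ℝ,
        μt = (1 / 2) * Real.log ((∫ ω, V E ω ∂P) ^ 4 / (∫ ω, (V E ω) ^ 2 ∂P)) →
        σt = Real.sqrt (Real.log ((∫ ω, (V E ω) ^ 2 ∂P) / (∫ ω, V E ω ∂P) ^ 2)) →
        ((ProbabilityTheory.gaussianReal μt ⟨σt ^ 2, sq_nonneg σt⟩).map Real.exp)
            (Set.Iio d₁) = ENNReal.ofReal (stdNormalCdf ((Real.log d₁ - μt) / σt)) ∧
        stdNormalCdf ((Real.log d₁ - μt) / σt) ≤ 1 / 2 ∧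
        (1 / 2 < p → stdNormalCdf ((Real.log d₁ - μt) / σt) < p)) := by
  obtain ⟨hp0, hp1⟩ := hp
  have hupper (E : ℝ) (hE : d₁ < E) : d₁ < upperValue p d₁ E :=
    lt_upperValue hp0.le hp1 hd₁.le hE
  have hne (E : ℝ) (hE : d₁ < E) : d₁ / 2 ≠ upperValue p d₁ E := by
    linarith [hupper E hE]
  have hlaw (E : ℝ) (hE : d₁ < E) : IsTwoPoint P (V E) (d₁ / 2) (upperValue p d₁ E) p :=
    ⟨hVmeas E, hV1 E hE, hV2 E hE⟩
  have hmean (E : ℝ) (hE : d₁ < E) : ∫ ω, V E ω ∂P = E := by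
    simpa [mean_upperValue hp1] using (hlaw E hE).integral_comp (hne E hE) hp0.le hp1.le id
  refine ⟨fun E hE => ⟨hupper E hE, hmean E hE,
      (hlaw E hE).measure_lt (by linarith) (hupper E hE).le,
      (hlaw E hE).variance_pos (hne E hE) hp0 hp1⟩,
    ⟨d₁ / (1 - p), ?_, fun E hE => quartic_nonneg hp0.le hp1 hd₁.le hE⟩,
    fun E hE => ?_, fun E hE h4 μt σt hμ hσ => ?_⟩
  · rw [lt_div_iff₀ (sub_pos.2 hp1)]
    nlinarith
  · rw [quartic_eq hp1, hmean E hE,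
      (hlaw E hE).integral_comp (hne E hE) hp0.le hp1.le (· ^ 2),
      mul_nonneg_iff_of_pos_left (sub_pos.2 hp1), sub_nonneg]
  · have hM := (hlaw E hE).sq_integral_lt_integral_sq (hne E hE) hp0 hp1
    rw [hmean E hE] at h4 hμ hσ hM
    obtain ⟨hcdf, hhalf⟩ := momentMatched_lognormal_Iio (hd₁.trans hE) hM hd₁ h4 hμ hσ
    exact ⟨hcdf, hhalf, hhalf.trans_lt⟩
end
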